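/- arXiv:1711.10106 — 13 statements merged into one kernel-verified Lean document; each statement's English description precedes it below -/
import Mathlib

section
/- Let b̃ ∈ ℝ^N be such that Q_{A,b̃} is nonempty, and define b ∈ ℝ^N by b_i := sup{a_iᵀx : x ∈ Q_{A,b̃}} for i = 1,…,N. Then b ∈ C_A, b ≤ b̃ componentwise, and Q_{A,b} = Q_{A,b̃}. -/
/-!
Each `b i` is the supremum of `⟪a i, ·⟫` over `Qset a btil`, which is at most `btil i`; so the
theorem follows once that supremum is known to be attained. This is the attainment theorem of
linear programming: a linear functional `⟪c, ·⟫` bounded above on a nonempty polyhedron attains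
its supremum. If the superlevel set through a feasible point is bounded, it is compact and carries
a maximizer. Otherwise it has an asymptotic direction: a unit vector `v` with `⟪a i, v⟫ ≤ 0` for
every constraint and `⟪c, v⟫ = 0`. Translating along `v` makes the constraints with
`⟪a i, v⟫ < 0` irrelevant, and projecting onto `vᗮ` then lowers the dimension without changing
the set of values of `⟪c, ·⟫`, so induction on the dimension of an ambient subspace concludes.
-/

open scoped RealInnerProductSpace

noncomputable section

/-- `Q_{A,b} = {x ∈ ℝ^d : a_iᵀx ≤ b_i for all i}`. -/
def Qset {d N : ℕ} (a : Fin N → EuclideanSpace ℝ (Fin d)) (b : Fin N → ℝ) :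
    Set (EuclideanSpace ℝ (Fin d)) :=
  {x | ∀ i, ⟪a i, x⟫ ≤ b i}

/-- `C_A = {b : for every i there is x ∈ Q_{A,b} with a_iᵀx = b_i}`. -/
def CA {d N : ℕ} (a : Fin N → EuclideanSpace ℝ (Fin d)) : Set (Fin N → ℝ) :=
  {b | ∀ i, ∃ x ∈ Qset a b, ⟪a i, x⟫ = b i}

open Bornology Filter Module Set Topology

theorem exists_isGreatest_image_of_isBounded_superlevel {E α : Type*} [PseudoMetricSpace E]
    [ProperSpace E] [LinearOrder α] [TopologicalSpace α] [ClosedIciTopology α] {f : E → α}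
    {S : Set E} (hf : ContinuousOn f S) (hS : IsClosed S) {x₀ : E} (hx₀ : x₀ ∈ S)
    (hbdd : IsBounded (S ∩ {x | f x₀ ≤ f x})) :
    ∃ m, IsGreatest (f '' S) m := by
  have hc : ∀ᶠ x in cocompact E ⊓ 𝓟 S, f x ≤ f x₀ :=
    mem_inf_of_inter hbdd.isCompact_closure.compl_mem_cocompact (mem_principal_self S)
      fun x ⟨hx, hxS⟩ ↦ show f x ≤ f x₀ from le_of_not_ge fun h ↦ hx (subset_closure ⟨hxS, h⟩)
  obtain ⟨x, hxS, hmax⟩ := hf.exists_isMaxOn' hS hx₀ hc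
  exact ⟨f x, mem_image_of_mem f hxS, forall_mem_image.2 hmax⟩

theorem exists_norm_eq_one_forall_le_zero_of_not_isBounded {E : Type*} [NormedAddCommGroup E]
    [NormedSpace ℝ E] [ProperSpace E] {S : Set E} (hS : ¬IsBounded S) :
    ∃ v : E, ‖v‖ = 1 ∧ ∀ ℓ : E →L[ℝ] ℝ, BddAbove (ℓ '' S) → ℓ v ≤ 0 := by
  have hfar : ∀ k : ℕ, ∃ x ∈ S, (k : ℝ) < ‖x‖ := fun k ↦ by
    by_contra! h
    exact hS (isBounded_iff_forall_norm_le.2 ⟨k, h⟩)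
  choose x hxS hxk using hfar
  have hxpos : ∀ k, 0 < ‖x k‖ := fun k ↦ (Nat.cast_nonneg k).trans_lt (hxk k)
  have hsphere : ∀ k, ‖x k‖⁻¹ • x k ∈ Metric.sphere (0 : E) 1 := fun k ↦ by
    simp [norm_smul, (hxpos k).ne']
  obtain ⟨v, hv, φ, hφ, hlim⟩ := (isCompact_sphere (0 : E) 1).tendsto_subseq hsphere
  refine ⟨v, by simpa using hv, fun ℓ ⟨M, hM⟩ ↦ ?_⟩
  have hinv : Tendsto (fun k ↦ ‖x (φ k)‖⁻¹) atTop (𝓝 0) :=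
    (tendsto_atTop_mono (fun k ↦ (Nat.cast_le.2 (hφ.le_apply)).trans (hxk (φ k)).le)
      tendsto_natCast_atTop_atTop).inv_tendsto_atTop
  refine le_of_tendsto_of_tendsto' ((ℓ.continuous.tendsto v).comp hlim)
    (by simpa using hinv.mul_const M) fun k ↦ ?_
  simp only [Function.comp_apply, map_smul, smul_eq_mul]
  exact mul_le_mul_of_nonneg_left (hM (mem_image_of_mem ℓ (hxS (φ k))))
    (inv_nonneg.2 (hxpos _).le)

variable {E ι : Type*} [NormedAddCommGroup E] [InnerProductSpace ℝ E]

def polyhedron (a : ι → E) (b : ι → ℝ) (s : Finset ι) : Set E :=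
  {x | ∀ i ∈ s, ⟪a i, x⟫ ≤ b i}

theorem isClosed_polyhedron (a : ι → E) (b : ι → ℝ) (s : Finset ι) :
    IsClosed (polyhedron a b s) := by
  simp only [polyhedron, ofPred_forall]
  exact isClosed_biInter fun i _ ↦
    isClosed_le (continuous_const.inner continuous_id) continuous_const

theorem exists_add_smul_mem_polyhedron {a : ι → E} {b : ι → ℝ} {s : Finset ι} {v y : E}
    (hav : ∀ i ∈ s, ⟪a i, v⟫ ≤ 0) (hy : y ∈ polyhedron a b {i ∈ s | ⟪a i, v⟫ = 0}) :
    ∃ t : ℝ, y + t • v ∈ polyhedron a b s := by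
  have h : ∀ i ∈ s, ∀ᶠ t : ℝ in atTop, ⟪a i, y + t • v⟫ ≤ b i := fun i hi ↦ by
    simp only [inner_add_right, real_inner_smul_right]
    rcases (hav i hi).lt_or_eq with hneg | hzero
    · filter_upwards [(tendsto_id.atTop_mul_const_of_neg hneg).eventually_le_atBot
        (b i - ⟪a i, y⟫)] with t ht
      simp only [id] at ht
      linarith
    · exact Eventually.of_forall fun t ↦ by
        simpa [hzero] using hy i (Finset.mem_filter.2 ⟨hi, hzero⟩)
  exact ((eventually_all_finset s).2 h).exists

theorem image_inner_inter_orthogonal_eq {a : ι → E} {b : ι → ℝ} {s : Finset ι} {c v : E}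
    {V : Submodule ℝ E} (hvV : v ∈ V) (hv : ‖v‖ = 1) (hav : ∀ i ∈ s, ⟪a i, v⟫ ≤ 0)
    (hcv : ⟪c, v⟫ = 0) :
    (⟪c, ·⟫) '' ((V ⊓ (ℝ ∙ v)ᗮ : Submodule ℝ E) ∩ polyhedron a b {i ∈ s | ⟪a i, v⟫ = 0}) =
      (⟪c, ·⟫) '' (V ∩ polyhedron a b s) := by
  apply Subset.antisymm
  · rintro _ ⟨y, ⟨⟨hyV, -⟩, hy⟩, rfl⟩
    obtain ⟨t, ht⟩ := exists_add_smul_mem_polyhedron hav hy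
    refine ⟨y + t • v, ⟨V.add_mem hyV (V.smul_mem t hvV), ht⟩, ?_⟩
    simp [inner_add_right, real_inner_smul_right, hcv]
  · rintro _ ⟨z, ⟨hzV, hz⟩, rfl⟩
    have hinner : ∀ w, ⟪w, z - ⟪v, z⟫ • v⟫ = ⟪w, z⟫ - ⟪v, z⟫ * ⟪w, v⟫ := fun w ↦ by
      rw [inner_sub_right, real_inner_smul_right]
    refine ⟨z - ⟪v, z⟫ • v, ⟨⟨V.sub_mem hzV (V.smul_mem _ hvV), ?_⟩, fun i hi ↦ ?_⟩, ?_⟩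
    · rw [SetLike.mem_coe, Submodule.mem_orthogonal_singleton_iff_inner_right, hinner,
        real_inner_self_eq_norm_sq, hv]
      ring
    · obtain ⟨his, hiv⟩ := Finset.mem_filter.1 hi
      simpa [hinner, hiv] using hz i his
    · simp [hinner, hcv]

theorem exists_isGreatest_image_inner_inter_polyhedron [FiniteDimensional ℝ E] (a : ι → E)
    (b : ι → ℝ) (c : E) (V : Submodule ℝ E) (s : Finset ι)
    (hne : (V ∩ polyhedron a b s : Set E).Nonempty)
    (hbdd : BddAbove ((⟪c, ·⟫) '' (V ∩ polyhedron a b s))) :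
    ∃ m, IsGreatest ((⟪c, ·⟫) '' (V ∩ polyhedron a b s)) m := by
  induction hV : finrank ℝ V using Nat.strong_induction_on generalizing V s with
  | _ n ih =>
  obtain ⟨x₀, hx₀⟩ := hne
  obtain ⟨M, hM⟩ := hbdd
  set T : Set E := (V ∩ polyhedron a b s) ∩ {x | ⟪c, x₀⟫ ≤ ⟪c, x⟫}
  by_cases hT : IsBounded T
  · exact exists_isGreatest_image_of_isBounded_superlevel
      (continuous_const.inner continuous_id).continuousOn
      (V.closed_of_finiteDimensional.inter (isClosed_polyhedron a b s)) hx₀ hT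
  obtain ⟨v, hv, hrec⟩ := exists_norm_eq_one_forall_le_zero_of_not_isBounded hT
  have hzero : ∀ w (L U : ℝ), (∀ x ∈ T, L ≤ ⟪w, x⟫ ∧ ⟪w, x⟫ ≤ U) → ⟪w, v⟫ = 0 := by
    intro w L U h
    refine le_antisymm ?_ ?_
    · simpa using hrec (innerSL ℝ w) ⟨U, by rintro _ ⟨x, hx, rfl⟩; simpa using (h x hx).2⟩
    · simpa using hrec (-innerSL ℝ w) ⟨-L, by rintro _ ⟨x, hx, rfl⟩; simpa using (h x hx).1⟩
  have hav : ∀ i ∈ s, ⟪a i, v⟫ ≤ 0 := fun i hi ↦ by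
    simpa using hrec (innerSL ℝ (a i))
      ⟨b i, by rintro _ ⟨x, ⟨⟨-, hx⟩, -⟩, rfl⟩; simpa using hx i hi⟩
  have hcv : ⟪c, v⟫ = 0 :=
    hzero c _ M fun x hx ↦ ⟨hx.2, hM (mem_image_of_mem _ hx.1)⟩
  have hvV : v ∈ V := by
    rw [← V.orthogonal_orthogonal, Submodule.mem_orthogonal]
    exact fun w hw ↦ hzero w 0 0 fun x hx ↦ by
      simp [V.inner_left_of_mem_orthogonal hx.1.1 hw]
  have hlt : finrank ℝ (V ⊓ (ℝ ∙ v)ᗮ : Submodule ℝ E) < n := by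
    refine hV ▸ Submodule.finrank_lt_finrank_of_lt (inf_le_left.lt_of_ne fun h ↦ ?_)
    have : v ∈ V ⊓ (ℝ ∙ v)ᗮ := by rw [h]; exact hvV
    rw [Submodule.mem_inf, Submodule.mem_orthogonal_singleton_iff_inner_right,
      real_inner_self_eq_norm_sq, hv] at this
    norm_num at this
  have himage := image_inner_inter_orthogonal_eq (b := b) hvV hv hav hcv
  rw [← himage] at hM ⊢
  refine ih _ hlt _ _ ?_ ⟨M, hM⟩ rfl
  exact image_nonempty.1 (by rw [himage]; exact ⟨_, mem_image_of_mem _ hx₀⟩)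

theorem exists_isGreatest_image_inner_polyhedron [FiniteDimensional ℝ E] [Fintype ι]
    (a : ι → E) (b : ι → ℝ) (c : E) (hne : {x | ∀ i, ⟪a i, x⟫ ≤ b i}.Nonempty)
    (hbdd : BddAbove ((⟪c, ·⟫) '' {x | ∀ i, ⟪a i, x⟫ ≤ b i})) :
    ∃ m, IsGreatest ((⟪c, ·⟫) '' {x | ∀ i, ⟪a i, x⟫ ≤ b i}) m := by
  have hP : {x | ∀ i, ⟪a i, x⟫ ≤ b i} = ((⊤ : Submodule ℝ E) : Set E) ∩ polyhedron a b .univ := by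
    ext; simp [polyhedron]
  rw [hP] at hne hbdd ⊢
  exact exists_isGreatest_image_inner_inter_polyhedron a b c ⊤ .univ hne hbdd

theorem stmt_0_general (d N : ℕ)
    (a : Fin N → EuclideanSpace ℝ (Fin d))
    (btil : Fin N → ℝ) (hne : (Qset a btil).Nonempty)
    (b : Fin N → ℝ)
    (hb : ∀ i, b i = sSup {r | ∃ x ∈ Qset a btil, ⟪a i, x⟫ = r}) :
    b ∈ CA a ∧ b ≤ btil ∧ Qset a b = Qset a btil := by
  have hbdd (i) : BddAbove ((⟪a i, ·⟫) '' Qset a btil) :=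
    ⟨btil i, by rintro _ ⟨x, hx, rfl⟩; exact hx i⟩
  choose m hm using fun i ↦ exists_isGreatest_image_inner_polyhedron a btil (a i) hne (hbdd i)
  obtain rfl : b = m := funext fun i ↦ (hb i).trans (hm i).csSup_eq
  choose x hxQ hxb using fun i ↦ (hm i).1
  have hle : b ≤ btil := fun i ↦ hxb i ▸ hxQ i i
  have hQ : Qset a b = Qset a btil :=
    Subset.antisymm (fun y hy i ↦ (hy i).trans (hle i)) fun y hy i ↦ (hm i).2 ⟨y, hy, rfl⟩
  exact ⟨fun i ↦ ⟨x i, hQ ▸ hxQ i, hxb i⟩, hle, hQ⟩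

theorem stmt_0 (d N : ℕ) (hd : 1 ≤ d) (hN : 1 ≤ N)
    (a : Fin N → EuclideanSpace ℝ (Fin d))
    (ha_inj : Function.Injective a) (ha_norm : ∀ i, ‖a i‖ = 1)
    (btil : Fin N → ℝ) (hne : (Qset a btil).Nonempty)
    (b : Fin N → ℝ)
    (hb : ∀ i, b i = sSup {r | ∃ x ∈ Qset a btil, ⟪a i, x⟫ = r}) :
    b ∈ CA a ∧ b ≤ btil ∧ Qset a b = Qset a btil :=
  stmt_0_general d N a btil hne b hb
end
end

section
/- For b ∈ ℝ^N, one has b ∈ C_A if and only if b ≤ b̃ componentwise for every b̃ ∈ ℝ^N with Q_{A,b} = Q_{A,b̃}. -/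
/-!
If the `i`-th inequality of `Q_{A,b}` is nowhere tight, then `x ↦ ⟪a_i, x⟫` stays below `b_i` on
`Q_{A,b}`, and since a linear functional attains its supremum on a nonempty polyhedron, it even
stays below some `c < b_i`; lowering `b_i` to `c` then leaves `Q_{A,b}` unchanged. Attainment
comes from closedness of the image of a polyhedron under a functional `f`: the image is the
slice `{s | s • w ∈ S + ker f}` for `f w = 1`, and `S + ker f` is again a polyhedron by
Fourier–Motzkin elimination along a finite spanning set of `ker f`.
-/

open scoped RealInnerProductSpace

noncomputable section

open scoped Pointwise

lemma exists_forall_le_and_forall_le {α ι κ : Type*} [LinearOrder α] [Nonempty α]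
    [Finite ι] [Finite κ] (l : ι → α) (u : κ → α) (h : ∀ j i, l j ≤ u i) :
    ∃ t, (∀ j, l j ≤ t) ∧ ∀ i, t ≤ u i := by
  cases isEmpty_or_nonempty ι
  · cases isEmpty_or_nonempty κ
    · exact ⟨Classical.arbitrary α, isEmptyElim, isEmptyElim⟩
    · obtain ⟨i₀, hi₀⟩ := Finite.exists_min u
      exact ⟨u i₀, isEmptyElim, hi₀⟩
  · obtain ⟨j₀, hj₀⟩ := Finite.exists_max l
    exact ⟨l j₀, hj₀, h j₀⟩

lemma mem_add_span_singleton_iff {R V : Type*} [Ring R] [AddCommGroup V] [Module R V]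
    {S : Set V} {u x : V} :
    x ∈ S + (R ∙ u : Set V) ↔ ∃ t : R, x + t • u ∈ S := by
  simp only [Set.mem_add, SetLike.mem_coe, Submodule.mem_span_singleton]
  constructor
  · rintro ⟨s, hs, _, ⟨t, rfl⟩, rfl⟩
    exact ⟨-t, by simpa using hs⟩
  · rintro ⟨t, ht⟩
    exact ⟨_, ht, _, ⟨-t, rfl⟩, by simp⟩

section Polyhedral

variable (𝕜 : Type*) {V : Type*} [Field 𝕜] [LinearOrder 𝕜] [IsStrictOrderedRing 𝕜]
  [AddCommGroup V] [Module 𝕜 V]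

def IsPolyhedral (S : Set V) : Prop :=
  ∃ (ι : Type) (_ : Finite ι) (g : ι → Module.Dual 𝕜 V) (β : ι → 𝕜),
    S = {x | ∀ i, g i x ≤ β i}

variable {𝕜}

/-- Fourier–Motzkin elimination: the constraints with `g u = 0` survive, and each pair of
constraints with `g u` of opposite signs is combined so that the `u`-direction cancels. -/
lemma IsPolyhedral.add_span_singleton {S : Set V} (hS : IsPolyhedral 𝕜 S) (u : V) :
    IsPolyhedral 𝕜 (S + (𝕜 ∙ u : Set V)) := by
  obtain ⟨ι, _, g, β, rfl⟩ := hS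
  refine ⟨{i // g i u = 0} ⊕ ({i // 0 < g i u} × {j // g j u < 0}), inferInstance,
    Sum.elim (fun i => g i) (fun p => g p.1 u • g p.2 - g p.2 u • g p.1),
    Sum.elim (fun i => β i) (fun p => g p.1 u * β p.2 - g p.2 u * β p.1), ?_⟩
  ext x
  simp only [mem_add_span_singleton_iff, Set.mem_ofPred_eq, map_add, map_smul, smul_eq_mul]
  constructor
  · rintro ⟨t, ht⟩ (⟨i, hi⟩ | ⟨⟨i, hi⟩, ⟨j, hj⟩⟩)
    · simpa [hi] using ht i
    · show g i u * g j x - g j u * g i x ≤ g i u * β j - g j u * β i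
      nlinarith [mul_le_mul_of_nonneg_left (ht j) hi.le,
        mul_le_mul_of_nonneg_left (ht i) (neg_nonneg.mpr hj.le)]
  · intro h
    have hzero : ∀ i, g i u = 0 → g i x ≤ β i := fun i hi => h (Sum.inl ⟨i, hi⟩)
    have hpair : ∀ i j, 0 < g i u → g j u < 0 →
        g i u * g j x - g j u * g i x ≤ g i u * β j - g j u * β i :=
      fun i j hi hj => h (Sum.inr (⟨i, hi⟩, ⟨j, hj⟩))
    obtain ⟨t, hlow, hup⟩ := exists_forall_le_and_forall_le
      (fun j : {j // g j u < 0} => (β j - g j x) / g j u)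
      (fun i : {i // 0 < g i u} => (β i - g i x) / g i u)
      (by
        rintro ⟨j, hj⟩ ⟨i, hi⟩
        rw [div_le_iff_of_neg hj, div_mul_eq_mul_div, div_le_iff₀ hi]
        linarith [hpair i j hi hj])
    refine ⟨t, fun i => ?_⟩
    rcases lt_trichotomy (g i u) 0 with hneg | hz | hpos
    · have := hlow ⟨i, hneg⟩
      rw [div_le_iff_of_neg hneg] at this
      linarith
    · simpa [hz] using hzero i hz
    · have := hup ⟨i, hpos⟩
      rw [le_div_iff₀ hpos] at this
      linarith

lemma IsPolyhedral.add_submodule {S : Set V} (hS : IsPolyhedral 𝕜 S) {W : Submodule 𝕜 V}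
    (hW : W.FG) : IsPolyhedral 𝕜 (S + (W : Set V)) := by
  induction W, hW using Submodule.fg_induction generalizing S with
  | singleton u => exact hS.add_span_singleton u
  | sup W₁ W₂ _ _ ih₁ ih₂ =>
    rw [Submodule.coe_sup, ← add_assoc]
    exact ih₂ (ih₁ hS)

end Polyhedral

section Real

variable {V : Type*} [NormedAddCommGroup V] [NormedSpace ℝ V] [FiniteDimensional ℝ V]
  {S : Set V}

lemma IsPolyhedral.isClosed (hS : IsPolyhedral ℝ S) : IsClosed S := by
  obtain ⟨ι, _, g, β, rfl⟩ := hS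
  simp only [Set.ofPred_forall]
  exact isClosed_iInter fun i =>
    isClosed_le (g i).continuous_of_finiteDimensional continuous_const

lemma IsPolyhedral.isClosed_image (hS : IsPolyhedral ℝ S) (f : Module.Dual ℝ V) :
    IsClosed (f '' S) := by
  by_cases hf : f = 0
  · subst hf
    exact Set.Subsingleton.isClosed fun _ ⟨_, _, hx⟩ _ ⟨_, _, hy⟩ => hx.symm.trans hy
  obtain ⟨w, hw⟩ : ∃ w, f w = 1 := by
    obtain ⟨v, hv⟩ := DFunLike.ne_iff.mp hf
    exact ⟨(f v)⁻¹ • v, by simp [inv_mul_cancel₀ hv]⟩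
  have himage : f '' S = (fun s : ℝ => s • w) ⁻¹' (S + LinearMap.ker f) := by
    ext s
    simp only [Set.mem_image, Set.mem_preimage, Set.mem_add, SetLike.mem_coe,
      LinearMap.mem_ker]
    constructor
    · rintro ⟨x, hx, rfl⟩
      exact ⟨x, hx, f x • w - x, by simp [hw], add_sub_cancel x _⟩
    · rintro ⟨x, hx, k, hk, hxk⟩
      exact ⟨x, hx, by simpa [hk, hw] using congrArg f hxk⟩
  rw [himage]
  exact ((hS.add_submodule (Module.Finite.iff_fg.mp inferInstance)).isClosed).preimage
    (continuous_id.smul continuous_const)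

lemma IsPolyhedral.exists_lt_forall_le (hS : IsPolyhedral ℝ S) (f : Module.Dual ℝ V) {β : ℝ}
    (h : ∀ x ∈ S, f x < β) : ∃ c < β, ∀ x ∈ S, f x ≤ c := by
  rcases S.eq_empty_or_nonempty with rfl | hne
  · exact ⟨β - 1, by linarith, by simp⟩
  have hbdd : BddAbove (f '' S) := ⟨β, by rintro _ ⟨x, hx, rfl⟩; exact (h x hx).le⟩
  obtain ⟨x₀, hx₀, hmax⟩ := (hS.isClosed_image f).csSup_mem (hne.image f) hbdd
  exact ⟨sSup (f '' S), hmax ▸ h x₀ hx₀, fun x hx => le_csSup hbdd ⟨x, hx, rfl⟩⟩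

end Real

section Constraints

variable {d N : ℕ} {a : Fin N → EuclideanSpace ℝ (Fin d)}

lemma isPolyhedral_Qset (b : Fin N → ℝ) : IsPolyhedral ℝ (Qset a b) :=
  ⟨Fin N, inferInstance, fun j => innerₗ _ (a j), b, rfl⟩

lemma Qset_update_eq {b : Fin N → ℝ} {i : Fin N} {c : ℝ} (hc : c ≤ b i)
    (h : ∀ x ∈ Qset a b, ⟪a i, x⟫ ≤ c) : Qset a (Function.update b i c) = Qset a b := by
  ext x
  refine ⟨fun hx j => ?_, fun hx j => ?_⟩
  · rcases eq_or_ne j i with rfl | hj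
    · exact (by simpa using hx j : ⟪a j, x⟫ ≤ c).trans hc
    · simpa [hj] using hx j
  · rcases eq_or_ne j i with rfl | hj
    · simpa using h x hx
    · simpa [hj] using hx j

end Constraints

theorem stmt_1_general (d N : ℕ)
    (a : Fin N → EuclideanSpace ℝ (Fin d))
    (b : Fin N → ℝ) :
    b ∈ CA a ↔ ∀ btil : Fin N → ℝ, Qset a b = Qset a btil → b ≤ btil := by
  constructor
  · intro hb btil hQ i
    obtain ⟨x, hx, hxi⟩ := hb i
    rw [hQ] at hx
    exact hxi ▸ hx i
  · intro H i
    by_contra! hslack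
    obtain ⟨c, hcb, hc⟩ := (isPolyhedral_Qset b).exists_lt_forall_le (innerₗ _ (a i))
      fun x hx => (hx i).lt_of_ne (hslack x hx)
    have hbc : b i ≤ c := by simpa using H _ (Qset_update_eq hcb.le hc).symm i
    exact hcb.not_ge hbc

theorem stmt_1 (d N : ℕ) (hd : 1 ≤ d) (hN : 1 ≤ N)
    (a : Fin N → EuclideanSpace ℝ (Fin d))
    (ha_inj : Function.Injective a) (ha_norm : ∀ i, ‖a i‖ = 1)
    (b : Fin N → ℝ) :
    b ∈ CA a ↔ ∀ btil : Fin N → ℝ, Qset a b = Qset a btil → b ≤ btil :=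
  stmt_1_general d N a b
end
end

section
/- The map φ : C_A → G_A defined by φ(b) := Q_{A,b} is a bijection. Moreover, there exists a constant L_A ≥ 0 such that dist_H(Q_{A,b}, Q_{A,b̃}) ≤ L_A · ‖b − b̃‖_∞ for all b, b̃ ∈ C_A, and conversely ‖b − b̃‖_∞ ≤ dist_H(Q_{A,b}, Q_{A,b̃}) for all b, b̃ ∈ C_A; in particular φ is a (bi-Lipschitz) homeomorphism between (C_A, ‖·‖_∞) and (G_A, dist_H). -/
open scoped RealInnerProductSpace

noncomputable section

/-- `G_A = {Q_{A,b} : b ∈ ℝ^N} \ {∅}`. -/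
def GA {d N : ℕ} (a : Fin N → EuclideanSpace ℝ (Fin d)) :
    Set (Set (EuclideanSpace ℝ (Fin d))) :=
  {S | (∃ b, S = Qset a b) ∧ S.Nonempty}

/-!
For `b ∈ C_A` every `b_i` is attained on `Q_{A,b}`, say at `x`; since `‖a_i‖ = 1`, every point
of `Q_{A,b̃}` lies at distance at least `b_i - b̃_i` from `x`. This gives the lower bound, and with
it injectivity.

The upper bound is Hoffman's error bound: if `Ax ≤ c + ε` and `Q_{A,c} ≠ ∅`, the projection `y` of
`x` onto `Q_{A,c}` satisfies `x - y = ∑ ν_j a_j` with `ν ≥ 0` supported on constraints active at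
`y` (Farkas); by Carathéodory the `a_j` involved can be taken linearly independent, so that
`∑ ν_j ≤ L ‖x - y‖` with `L` depending only on `A`, and `‖x - y‖² = ∑ ν_j a_jᵀ(x - y) ≤ ε ∑ ν_j`
yields `‖x - y‖ ≤ L ε`.

Surjectivity needs that a linear functional bounded above on a nonempty polyhedron attains its
supremum. This also follows from Hoffman's bound, which moves every near-maximizer into a
fixed compact ball.
-/

open Filter Topology Metric

section ConicHull

variable {ι E : Type*}

section Module

variable [AddCommGroup E] [Module ℝ E] {a : ι → E} {s t : Finset ι} {v : E}

def conicHull (a : ι → E) (s : Finset ι) : PointedCone ℝ E where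
  carrier := {v | ∃ μ : ι → ℝ, (∀ j ∈ s, 0 ≤ μ j) ∧ v = ∑ j ∈ s, μ j • a j}
  add_mem' := by
    rintro _ _ ⟨μ, hμ, rfl⟩ ⟨ν, hν, rfl⟩
    exact ⟨μ + ν, fun j hj => add_nonneg (hμ j hj) (hν j hj),
      by simp only [Pi.add_apply, add_smul, Finset.sum_add_distrib]⟩
  zero_mem' := ⟨0, fun _ _ => le_rfl, by simp⟩
  smul_mem' := by
    rintro c _ ⟨μ, hμ, rfl⟩
    exact ⟨fun j => c * μ j, fun j hj => mul_nonneg c.2 (hμ j hj),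
      by simp only [Finset.smul_sum, ← Nonneg.coe_smul, smul_smul]⟩

theorem apply_mem_conicHull {j : ι} (hj : j ∈ s) : a j ∈ conicHull a s := by
  classical
  refine ⟨Pi.single j 1, fun k _ => by by_cases hk : k = j <;> simp [hk], ?_⟩
  rw [Finset.sum_eq_single_of_mem j hj fun k _ hk => by simp [hk]]
  simp

theorem conicHull_mono (hts : t ⊆ s) : conicHull a t ≤ conicHull a s := by
  classical
  rintro _ ⟨μ, hμ, rfl⟩
  refine ⟨fun j => if j ∈ t then μ j else 0, fun j _ => ?_, ?_⟩
  · dsimp only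
    split_ifs with hj
    exacts [hμ j hj, le_rfl]
  · rw [← Finset.sum_subset hts fun j _ hj => by simp [hj]]
    exact Finset.sum_congr rfl fun j hj => by simp [hj]

theorem exists_sum_smul_eq_zero_pos_of_not_linearIndepOn (h : ¬LinearIndepOn ℝ a s) :
    ∃ c : ι → ℝ, ∑ j ∈ s, c j • a j = 0 ∧ ∃ j ∈ s, 0 < c j := by
  obtain ⟨c, hc, j, hj, hcj⟩ := not_linearIndepOn_finset_iff.mp h
  rcases hcj.lt_or_gt with hneg | hpos
  · exact ⟨-c, by simp [neg_smul, Finset.sum_neg_distrib, hc], j, hj, neg_pos.mpr hneg⟩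
  · exact ⟨c, hc, j, hj, hpos⟩

/-- Subtracting the largest multiple of a positive dependence `c` that keeps the coefficients
nonnegative kills one of them. -/
theorem exists_mem_conicHull_erase_of_not_linearIndepOn [DecidableEq ι] (h : ¬LinearIndepOn ℝ a s)
    (hv : v ∈ conicHull a s) : ∃ j ∈ s, v ∈ conicHull a (s.erase j) := by
  obtain ⟨μ, hμ, rfl⟩ := hv
  obtain ⟨c, hc, j, hj, hcj⟩ := exists_sum_smul_eq_zero_pos_of_not_linearIndepOn h
  obtain ⟨j₀, hj₀, hmin⟩ := {k ∈ s | 0 < c k}.exists_min_image (fun k => μ k / c k)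
    ⟨j, Finset.mem_filter.mpr ⟨hj, hcj⟩⟩
  obtain ⟨hj₀s, hcj₀⟩ := Finset.mem_filter.mp hj₀
  set r := μ j₀ / c j₀
  have hr : 0 ≤ r := div_nonneg (hμ j₀ hj₀s) hcj₀.le
  refine ⟨j₀, hj₀s, fun k => μ k - r * c k, fun k hk => ?_, ?_⟩
  · have hks := Finset.mem_of_mem_erase hk
    rcases le_or_gt (c k) 0 with hck | hck
    · nlinarith [hμ k hks]
    · have := hmin k (Finset.mem_filter.mpr ⟨hks, hck⟩)
      rw [le_div_iff₀ hck] at this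
      linarith
  · have hzero : (μ j₀ - r * c j₀) • a j₀ = 0 := by
      rw [div_mul_cancel₀ _ hcj₀.ne', sub_self, zero_smul]
    rw [Finset.sum_erase s (f := fun k => (μ k - r * c k) • a k) hzero]
    simp only [sub_smul, Finset.sum_sub_distrib, mul_smul, ← Finset.smul_sum, hc, smul_zero,
      sub_zero]

/-- Carathéodory's theorem for cones. -/
theorem exists_linearIndepOn_of_mem_conicHull (hv : v ∈ conicHull a s) :
    ∃ t ⊆ s, LinearIndepOn ℝ a t ∧ v ∈ conicHull a t := by
  induction s using Finset.strongInduction with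
  | H s ih =>
    by_cases hli : LinearIndepOn ℝ a s
    · exact ⟨s, subset_rfl, hli, hv⟩
    · classical
      obtain ⟨j, hj, hv'⟩ := exists_mem_conicHull_erase_of_not_linearIndepOn hli hv
      obtain ⟨t, hts, ht, hvt⟩ := ih _ (Finset.erase_ssubset hj) hv'
      exact ⟨t, hts.trans (Finset.erase_subset _ _), ht, hvt⟩

theorem linearCombination_coe_sort_apply (a : ι → E) (t : Finset ι) (μ : ι → ℝ) :
    Fintype.linearCombination ℝ (fun j : t => a j) (fun j => μ j) = ∑ j ∈ t, μ j • a j := by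
  rw [Fintype.linearCombination_apply]
  exact Finset.sum_coe_sort t fun j => μ j • a j

theorem coe_conicHull_eq_image (a : ι → E) (t : Finset ι) :
    (conicHull a t : Set E) = Fintype.linearCombination ℝ (fun j : t => a j) '' Set.Ici 0 := by
  classical
  ext v
  constructor
  · rintro ⟨μ, hμ, rfl⟩
    exact ⟨fun j => μ j, fun j => hμ j j.2, linearCombination_coe_sort_apply a t μ⟩
  · rintro ⟨w, hw, rfl⟩
    refine ⟨fun j => if h : j ∈ t then w ⟨j, h⟩ else 0, fun j hj => by simpa [hj] using hw ⟨j, hj⟩,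
      ?_⟩
    rw [← linearCombination_coe_sort_apply]
    congr 1
    ext j
    simp

end Module

section Normed

variable [NormedAddCommGroup E] [NormedSpace ℝ E] {a : ι → E} {t : Finset ι}

theorem isClosed_conicHull_of_linearIndepOn (ht : LinearIndepOn ℝ a t) :
    IsClosed (conicHull a t : Set E) := by
  rw [coe_conicHull_eq_image]
  have hinj := linearIndependent_iff_injective_fintypeLinearCombination.mp ht
  exact (LinearMap.isClosedEmbedding_of_injective (LinearMap.ker_eq_bot.mpr hinj)).isClosedMap _
    isClosed_Ici

theorem isClosed_conicHull (a : ι → E) (s : Finset ι) : IsClosed (conicHull a s : Set E) := by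
  classical
  have hunion : (conicHull a s : Set E) =
      ⋃ (t : Finset ι) (_ : t ∈ s.powerset.filter fun t : Finset ι => LinearIndepOn ℝ a t),
        (conicHull a t : Set E) := by
    ext v
    simp only [Set.mem_iUnion, Finset.mem_filter, Finset.mem_powerset, SetLike.mem_coe,
      exists_prop]
    constructor
    · intro hv
      obtain ⟨t, hts, ht, hvt⟩ := exists_linearIndepOn_of_mem_conicHull hv
      exact ⟨t, ⟨hts, ht⟩, hvt⟩
    · rintro ⟨t, ⟨hts, -⟩, hvt⟩
      exact conicHull_mono hts hvt
  rw [hunion]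
  exact isClosed_biUnion_finset fun t ht =>
    isClosed_conicHull_of_linearIndepOn (Finset.mem_filter.mp ht).2

theorem LinearIndepOn.exists_sum_le_mul_norm_sum_smul (ht : LinearIndepOn ℝ a t) :
    ∃ C, ∀ μ : ι → ℝ, (∀ j ∈ t, 0 ≤ μ j) → ∑ j ∈ t, μ j ≤ C * ‖∑ j ∈ t, μ j • a j‖ := by
  set T := Fintype.linearCombination ℝ (fun j : t => a j)
  have hinj := linearIndependent_iff_injective_fintypeLinearCombination.mp ht
  obtain ⟨K, -, hK⟩ := T.exists_antilipschitzWith (LinearMap.ker_eq_bot.mpr hinj)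
  refine ⟨t.card * K, fun μ _ => ?_⟩
  set w : t → ℝ := fun j => μ j
  calc ∑ j ∈ t, μ j = ∑ j : t, w j := (Finset.sum_coe_sort t μ).symm
    _ ≤ ∑ _j : t, ‖w‖ := Finset.sum_le_sum fun j _ => (le_abs_self _).trans (norm_le_pi_norm w j)
    _ = t.card * ‖w‖ := by simp
    _ ≤ t.card * (K * ‖T w‖) := by gcongr; exact ZeroHomClass.bound_of_antilipschitz T hK w
    _ = t.card * K * ‖∑ j ∈ t, μ j • a j‖ := by rw [linearCombination_coe_sort_apply]; ring

theorem exists_sum_le_mul_norm_sum_smul [Finite ι] (a : ι → E) :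
    ∃ L, 0 ≤ L ∧ ∀ t : Finset ι, LinearIndepOn ℝ a t → ∀ μ : ι → ℝ, (∀ j ∈ t, 0 ≤ μ j) →
      ∑ j ∈ t, μ j ≤ L * ‖∑ j ∈ t, μ j • a j‖ := by
  have hev : ∀ t : Finset ι, ∀ᶠ L in atTop, 0 ≤ L ∧ (LinearIndepOn ℝ a t →
      ∀ μ : ι → ℝ, (∀ j ∈ t, 0 ≤ μ j) → ∑ j ∈ t, μ j ≤ L * ‖∑ j ∈ t, μ j • a j‖) := by
    intro t
    by_cases ht : LinearIndepOn ℝ a t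
    · obtain ⟨C, hC⟩ := ht.exists_sum_le_mul_norm_sum_smul
      filter_upwards [eventually_ge_atTop 0, eventually_ge_atTop C] with L hL hCL
      exact ⟨hL, fun _ μ hμ => (hC μ hμ).trans (by gcongr)⟩
    · filter_upwards [eventually_ge_atTop 0] with L hL
      exact ⟨hL, fun h => absurd h ht⟩
  obtain ⟨L, hL⟩ := (eventually_all.mpr hev).exists
  exact ⟨L, (hL ∅).1, fun t => (hL t).2⟩

end Normed

theorem exists_inner_pos_of_notMem_conicHull [NormedAddCommGroup E] [InnerProductSpace ℝ E]
    [CompleteSpace E] {a : ι → E} {s : Finset ι} {v : E} (hv : v ∉ conicHull a s) :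
    ∃ u, (∀ j ∈ s, ⟪a j, u⟫ ≤ 0) ∧ 0 < ⟪v, u⟫ := by
  obtain ⟨y, hy, hvy⟩ :=
    ProperCone.hyperplane_separation' (C := ⟨conicHull a s, isClosed_conicHull a s⟩) hv
  refine ⟨-y, fun j hj => ?_, by simpa [inner_neg_right] using hvy⟩
  simpa [inner_neg_right] using hy (a j) (apply_mem_conicHull hj)

end ConicHull

section Polyhedron

variable {d N : ℕ} {a : Fin N → EuclideanSpace ℝ (Fin d)} {b c : Fin N → ℝ}

theorem isClosed_Qset (a : Fin N → EuclideanSpace ℝ (Fin d)) (c : Fin N → ℝ) :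
    IsClosed (Qset a c) := by
  simp only [Qset, Set.ofPred_forall]
  exact isClosed_iInter fun i => isClosed_le (continuous_const.inner continuous_id) continuous_const

theorem convex_Qset (a : Fin N → EuclideanSpace ℝ (Fin d)) (c : Fin N → ℝ) :
    Convex ℝ (Qset a c) := by
  simp only [Qset, Set.ofPred_forall]
  exact convex_iInter fun i => convex_halfSpace_le (innerₛₗ ℝ (a i)).isLinear (c i)

theorem Qset_nonempty_of_mem_CA (hb : b ∈ CA a) : (Qset a b).Nonempty := by
  rcases isEmpty_or_nonempty (Fin N) with _ | ⟨⟨i⟩⟩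
  · exact ⟨0, isEmptyElim⟩
  · exact (hb i).imp fun x hx => hx.1

theorem mem_Qset_snoc_neg {w z : EuclideanSpace ℝ (Fin d)} {r : ℝ} :
    z ∈ Qset (Fin.snoc a (-w)) (Fin.snoc c (-r)) ↔ z ∈ Qset a c ∧ r ≤ ⟪w, z⟫ := by
  simp [Qset, Fin.forall_fin_succ', inner_neg_left]

theorem exists_pos_add_smul_mem_Qset {y u : EuclideanSpace ℝ (Fin d)} (hy : y ∈ Qset a c)
    (hu : ∀ j, ⟪a j, y⟫ = c j → ⟪a j, u⟫ ≤ 0) : ∃ ε : ℝ, 0 < ε ∧ y + ε • u ∈ Qset a c := by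
  have hev : ∀ j, ∀ᶠ ε in 𝓝[>] (0 : ℝ), ⟪a j, y + ε • u⟫ ≤ c j := by
    intro j
    simp only [inner_add_right, real_inner_smul_right]
    rcases le_or_gt ⟪a j, u⟫ 0 with hju | hju
    · filter_upwards [self_mem_nhdsWithin] with ε (hε : 0 < ε)
      nlinarith [hy j]
    · have hlt : ⟪a j, y⟫ < c j := (hy j).lt_of_ne fun h => (hu j h).not_gt hju
      have hcont := (by fun_prop : Continuous fun ε : ℝ => ⟪a j, y⟫ + ε * ⟪a j, u⟫).tendsto 0
      rw [zero_mul, add_zero] at hcont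
      exact nhdsWithin_le_nhds ((hcont.eventually (gt_mem_nhds hlt)).mono fun _ h => h.le)
  obtain ⟨ε, hmem, hε⟩ := ((eventually_all.mpr hev).and self_mem_nhdsWithin).exists
  exact ⟨ε, hε, hmem⟩

/-- The Karush–Kuhn–Tucker condition at the projection `y` of `x` onto `Q_{A,c}`. -/
theorem exists_mem_Qset_sub_mem_conicHull (hne : (Qset a c).Nonempty)
    (x : EuclideanSpace ℝ (Fin d)) :
    ∃ y ∈ Qset a c, ∃ s : Finset (Fin N), (∀ j ∈ s, ⟪a j, y⟫ = c j) ∧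
      x - y ∈ conicHull a s := by
  obtain ⟨y, hy, hproj⟩ := exists_norm_eq_iInf_of_complete_convex hne
    (isClosed_Qset a c).isComplete (convex_Qset a c) x
  have hobtuse := (norm_eq_iInf_iff_real_inner_le_zero (convex_Qset a c) hy).mp hproj
  refine ⟨y, hy, ({j | ⟪a j, y⟫ = c j} : Finset (Fin N)),
    fun j hj => (Finset.mem_filter.mp hj).2, ?_⟩
  by_contra hxy
  obtain ⟨u, hu, hpos⟩ := exists_inner_pos_of_notMem_conicHull hxy
  obtain ⟨ε, hε, hmem⟩ := exists_pos_add_smul_mem_Qset hy fun j hj => hu j (by simpa using hj)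
  have := hobtuse _ hmem
  rw [add_sub_cancel_left, real_inner_smul_right] at this
  exact (mul_pos hε hpos).not_ge this

theorem exists_hoffman_bound (a : Fin N → EuclideanSpace ℝ (Fin d)) :
    ∃ L, 0 ≤ L ∧ ∀ (c : Fin N → ℝ) (x : EuclideanSpace ℝ (Fin d)) (ε : ℝ), 0 ≤ ε →
      (Qset a c).Nonempty → (∀ i, ⟪a i, x⟫ ≤ c i + ε) → ∃ y ∈ Qset a c, ‖x - y‖ ≤ L * ε := by
  obtain ⟨L, hL, hcoer⟩ := exists_sum_le_mul_norm_sum_smul a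
  refine ⟨L, hL, fun c x ε hε hne hx => ?_⟩
  obtain ⟨y, hy, s, hact, hxy⟩ := exists_mem_Qset_sub_mem_conicHull hne x
  obtain ⟨t, hts, ht, ν, hν, hxyν⟩ := exists_linearIndepOn_of_mem_conicHull hxy
  have hsq : ‖x - y‖ ^ 2 ≤ (∑ j ∈ t, ν j) * ε := calc
    ‖x - y‖ ^ 2 = ∑ j ∈ t, ν j * ⟪a j, x - y⟫ := by
      rw [← real_inner_self_eq_norm_sq]
      nth_rw 1 [hxyν]
      simp only [sum_inner, real_inner_smul_left]
    _ ≤ ∑ j ∈ t, ν j * ε := by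
      refine Finset.sum_le_sum fun j hj => mul_le_mul_of_nonneg_left ?_ (hν j hj)
      rw [inner_sub_right, hact j (hts hj)]
      linarith [hx j]
    _ = (∑ j ∈ t, ν j) * ε := (Finset.sum_mul ..).symm
  have hsum : ∑ j ∈ t, ν j ≤ L * ‖x - y‖ := hxyν ▸ hcoer t ht ν hν
  refine ⟨y, hy, ?_⟩
  nlinarith [norm_nonneg (x - y), mul_nonneg hL hε]

theorem exists_isMaxOn_inner_Qset (w : EuclideanSpace ℝ (Fin d)) (hne : (Qset a c).Nonempty)
    (hbdd : BddAbove ((fun z => ⟪w, z⟫) '' Qset a c)) :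
    ∃ x ∈ Qset a c, IsMaxOn (fun z => ⟪w, z⟫) (Qset a c) x := by
  obtain ⟨L, hL, hoff⟩ := exists_hoffman_bound (Fin.snoc a (-w))
  obtain ⟨_, ⟨x₀, hx₀, rfl⟩, hx₀sup⟩ :=
    exists_lt_of_lt_csSup (hne.image _) (sub_one_lt (sSup ((fun z => ⟪w, z⟫) '' Qset a c)))
  obtain ⟨x, hx, hmax⟩ :=
    ((isCompact_closedBall x₀ L).inter_left (isClosed_Qset a c)).exists_isMaxOn
      ⟨x₀, hx₀, mem_closedBall_self hL⟩ (by fun_prop : Continuous fun z => ⟪w, z⟫).continuousOn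
  refine ⟨x, hx.1, fun z hz => ?_⟩
  -- `x₀` violates the constraint `⟪w, ·⟫ ≥ ⟪w, z⟫` by less than `1`.
  have hx₀z : ∀ i, ⟪(Fin.snoc a (-w) : Fin (N + 1) → _) i, x₀⟫ ≤
      (Fin.snoc c (-⟪w, z⟫) : Fin (N + 1) → ℝ) i + 1 := by
    refine Fin.lastCases ?_ fun i => ?_
    · simp only [Fin.snoc_last, inner_neg_left]
      linarith [le_csSup hbdd ⟨z, hz, rfl⟩]
    · simp only [Fin.snoc_castSucc]
      linarith [hx₀ i]
  obtain ⟨y, hy, hx₀y⟩ :=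
    hoff _ x₀ 1 zero_le_one ⟨z, mem_Qset_snoc_neg.mpr ⟨hz, le_rfl⟩⟩ hx₀z
  obtain ⟨hyQ, hzy⟩ := mem_Qset_snoc_neg.mp hy
  exact hzy.trans (hmax ⟨hyQ, by rw [mem_closedBall', dist_eq_norm]; linarith⟩)

theorem exists_mem_CA_Qset_eq (hne : (Qset a c).Nonempty) : ∃ b ∈ CA a, Qset a b = Qset a c := by
  choose x hx hmax using fun i =>
    exists_isMaxOn_inner_Qset (a i) hne ⟨c i, by rintro _ ⟨z, hz, rfl⟩; exact hz i⟩
  have hQ : Qset a (fun i => ⟪a i, x i⟫) = Qset a c :=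
    Set.ext fun z => ⟨fun hz i => (hz i).trans (hx i i), fun hz i => hmax i hz⟩
  exact ⟨_, fun i => ⟨x i, hQ ▸ hx i, rfl⟩, hQ⟩

theorem exists_hausdorffEDist_Qset_le (a : Fin N → EuclideanSpace ℝ (Fin d)) :
    ∃ L, 0 ≤ L ∧ ∀ b b' : Fin N → ℝ, (Qset a b).Nonempty → (Qset a b').Nonempty →
      hausdorffEDist (Qset a b) (Qset a b') ≤ ENNReal.ofReal (L * ‖b - b'‖) := by
  obtain ⟨L, hL, hoff⟩ := exists_hoffman_bound a
  have hinf : ∀ p q : Fin N → ℝ, (Qset a q).Nonempty → ∀ x ∈ Qset a p,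
      infEDist x (Qset a q) ≤ ENNReal.ofReal (L * ‖p - q‖) := by
    intro p q hq x hx
    have hpq : ∀ i, p i ≤ q i + ‖p - q‖ := fun i => by
      have := norm_le_pi_norm (p - q) i
      rw [Pi.sub_apply, Real.norm_eq_abs] at this
      linarith [le_abs_self (p i - q i)]
    obtain ⟨y, hy, hxy⟩ := hoff q x _ (norm_nonneg _) hq fun i => (hx i).trans (hpq i)
    calc infEDist x (Qset a q) ≤ edist x y := infEDist_le_edist_of_mem hy
      _ = ENNReal.ofReal ‖x - y‖ := by rw [edist_dist, dist_eq_norm]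
      _ ≤ ENNReal.ofReal (L * ‖p - q‖) := ENNReal.ofReal_le_ofReal hxy
  exact ⟨L, hL, fun b b' hb hb' =>
    hausdorffEDist_le_of_infEDist (hinf b b' hb') (norm_sub_rev b b' ▸ hinf b' b hb)⟩

theorem ofReal_sub_le_hausdorffEDist_Qset (ha : ∀ i, ‖a i‖ ≤ 1) {i : Fin N}
    (hb : ∃ x ∈ Qset a b, ⟪a i, x⟫ = b i) (b' : Fin N → ℝ) :
    ENNReal.ofReal (b i - b' i) ≤ hausdorffEDist (Qset a b) (Qset a b') := by
  obtain ⟨x, hx, hxi⟩ := hb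
  refine le_trans (le_infEDist.mpr fun y hy => ?_) (infEDist_le_hausdorffEDist_of_mem hx)
  rw [edist_dist, dist_eq_norm]
  refine ENNReal.ofReal_le_ofReal ?_
  calc b i - b' i ≤ ⟪a i, x⟫ - ⟪a i, y⟫ := by linarith [hy i]
    _ = ⟪a i, x - y⟫ := (inner_sub_right _ _ _).symm
    _ ≤ ‖a i‖ * ‖x - y‖ := real_inner_le_norm _ _
    _ ≤ ‖x - y‖ := mul_le_of_le_one_left (norm_nonneg _) (ha i)

theorem edist_le_hausdorffEDist_Qset (ha : ∀ i, ‖a i‖ ≤ 1) {b' : Fin N → ℝ} (hb : b ∈ CA a)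
    (hb' : b' ∈ CA a) : edist b b' ≤ hausdorffEDist (Qset a b) (Qset a b') := by
  refine edist_pi_le_iff.mpr fun i => ?_
  rw [edist_dist (b i), Real.dist_eq, abs_eq_max_neg, neg_sub, ENNReal.ofReal_max]
  exact max_le (ofReal_sub_le_hausdorffEDist_Qset ha (hb i) b')
    (hausdorffEDist_comm (s := Qset a b') ▸ ofReal_sub_le_hausdorffEDist_Qset ha (hb' i) b)

end Polyhedron

theorem stmt_2_general (d N : ℕ)
    (a : Fin N → EuclideanSpace ℝ (Fin d))
    (ha_norm : ∀ i, ‖a i‖ = 1) :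
    Set.BijOn (fun b => Qset a b) (CA a) (GA a) ∧
    (∃ L : ℝ, 0 ≤ L ∧ ∀ b ∈ CA a, ∀ btil ∈ CA a,
      EMetric.hausdorffEdist (Qset a b) (Qset a btil) ≤ ENNReal.ofReal (L * ‖b - btil‖)) ∧
    (∀ b ∈ CA a, ∀ btil ∈ CA a,
      ENNReal.ofReal ‖b - btil‖ ≤ EMetric.hausdorffEdist (Qset a b) (Qset a btil)) := by
  have hlower : ∀ b ∈ CA a, ∀ btil ∈ CA a, edist b btil ≤ hausdorffEDist (Qset a b) (Qset a btil) :=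
    fun b hb btil hbtil => edist_le_hausdorffEDist_Qset (fun i => (ha_norm i).le) hb hbtil
  obtain ⟨L, hL, hupper⟩ := exists_hausdorffEDist_Qset_le a
  refine ⟨⟨fun b hb => ⟨⟨b, rfl⟩, Qset_nonempty_of_mem_CA hb⟩, fun b hb btil hbtil hQ => ?_, ?_⟩,
    ⟨L, hL, fun b hb btil hbtil =>
      hupper b btil (Qset_nonempty_of_mem_CA hb) (Qset_nonempty_of_mem_CA hbtil)⟩,
    fun b hb btil hbtil => by rw [← dist_eq_norm, ← edist_dist]; exact hlower b hb btil hbtil⟩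
  · simpa only [hQ, hausdorffEDist_self, edist_le_zero] using hlower b hb btil hbtil
  · rintro _ ⟨⟨c, rfl⟩, hne⟩
    exact exists_mem_CA_Qset_eq hne

theorem stmt_2 (d N : ℕ) (hd : 1 ≤ d) (hN : 1 ≤ N)
    (a : Fin N → EuclideanSpace ℝ (Fin d))
    (ha_inj : Function.Injective a) (ha_norm : ∀ i, ‖a i‖ = 1) :
    Set.BijOn (fun b => Qset a b) (CA a) (GA a) ∧
    (∃ L : ℝ, 0 ≤ L ∧ ∀ b ∈ CA a, ∀ btil ∈ CA a,
      EMetric.hausdorffEdist (Qset a b) (Qset a btil) ≤ ENNReal.ofReal (L * ‖b - btil‖)) ∧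
    (∀ b ∈ CA a, ∀ btil ∈ CA a,
      ENNReal.ofReal ‖b - btil‖ ≤ EMetric.hausdorffEdist (Qset a b) (Qset a btil)) :=
  stmt_2_general d N a ha_norm
end
end

section
/- Either every member of G_A is unbounded, or every member of G_A is bounded. The second alternative (all members bounded) holds if and only if Q_{A,0} = {0}, and this is also equivalent to the condition that Q*_{A,c} is nonempty for every c ∈ ℝ^d. -/
/-! The recession cone `Qset a 0` decides everything. A nonzero `y ∈ Qset a 0` gives a ray
`x + t • y` inside every nonempty `Qset a b`. If `Qset a 0 = {0}`, no nonzero `y` satisfies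
`⟪a i, y⟫ ≤ 0` for all `i`, so by hyperplane separation the cone generated by the `a i` is dense,
hence (being convex, in finite dimension) the whole space: this is Farkas' lemma. Finally, if every
`c` is a nonnegative combination `∑ i, p i • a i`, then `⟪c, x⟫ ≤ ∑ i, p i * b i` on `Qset a b`, so
every linear functional is bounded above there and `Qset a b` is bounded. -/

open scoped RealInnerProductSpace

noncomputable section

/-- `Q*_{A,c} = {p ∈ ℝ^N : p ≥ 0, Aᵀp = c}`. -/
def Qstar {d N : ℕ} (a : Fin N → EuclideanSpace ℝ (Fin d)) (c : EuclideanSpace ℝ (Fin d)) :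
    Set (Fin N → ℝ) :=
  {p | (∀ i, 0 ≤ p i) ∧ ∑ i, p i • a i = c}

theorem not_isBounded_of_forall_add_smul_mem {E : Type*} [NormedAddCommGroup E]
    [NormedSpace ℝ E] {s : Set E} {x y : E} (hy : y ≠ 0)
    (hray : ∀ t : ℝ, 0 ≤ t → x + t • y ∈ s) : ¬ Bornology.IsBounded s := by
  intro hs
  obtain ⟨C, hC⟩ := hs.exists_norm_le
  have hy' : 0 < ‖y‖ := norm_pos_iff.2 hy
  set t := (|C| + ‖x‖ + 1) / ‖y‖
  have ht : 0 ≤ t := by positivity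
  have hnorm : ‖t • y‖ = |C| + ‖x‖ + 1 := by
    rw [norm_smul, Real.norm_of_nonneg ht, div_mul_cancel₀ _ hy'.ne']
  have hle := calc |C| + ‖x‖ + 1 = ‖t • y‖ := hnorm.symm
    _ ≤ ‖x + t • y‖ + ‖x‖ := norm_le_add_norm_add' x (t • y)
    _ ≤ C + ‖x‖ := by gcongr; exact hC _ (hray t ht)
  linarith [le_abs_self C]

theorem isBounded_of_forall_bddAbove_inner {E : Type*} [NormedAddCommGroup E]
    [InnerProductSpace ℝ E] [FiniteDimensional ℝ E] {s : Set E}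
    (h : ∀ c : E, BddAbove ((⟪c, ·⟫) '' s)) : Bornology.IsBounded s := by
  let b := stdOrthonormalBasis ℝ E
  have hcoord : ∀ j, ∃ M, ∀ x ∈ s, |⟪b j, x⟫| ≤ M := by
    intro j
    obtain ⟨M₁, h₁⟩ := h (b j)
    obtain ⟨M₂, h₂⟩ := h (-b j)
    refine ⟨max M₁ M₂, fun x hx => abs_le.2 ⟨?_, ?_⟩⟩
    · have := h₂ (Set.mem_image_of_mem _ hx)
      rw [inner_neg_left] at this
      linarith [le_max_right M₁ M₂]
    · exact (h₁ (Set.mem_image_of_mem _ hx)).trans (le_max_left M₁ M₂)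
  choose M hM using hcoord
  refine isBounded_iff_forall_norm_le.2 ⟨∑ j, M j, fun x hx => ?_⟩
  calc ‖x‖ = ‖∑ j, ⟪b j, x⟫ • b j‖ := by rw [b.sum_repr']
    _ ≤ ∑ j, ‖⟪b j, x⟫ • b j‖ := norm_sum_le _ _
    _ = ∑ j, |⟪b j, x⟫| := by simp [norm_smul, b.orthonormal.1]
    _ ≤ ∑ j, M j := Finset.sum_le_sum fun j _ => hM j x hx

theorem Convex.eq_univ_of_dense {E : Type*} [NormedAddCommGroup E] [NormedSpace ℝ E]
    [FiniteDimensional ℝ E] {s : Set E} (hs : Convex ℝ s) (hd : Dense s) : s = Set.univ := by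
  have hspan : affineSpan ℝ s = ⊤ := by
    rw [← AffineSubspace.coe_eq_univ_iff, ← Set.univ_subset_iff, ← hd.closure_eq]
    exact (affineSpan ℝ s).closed_of_finiteDimensional.closure_subset_iff.2 (subset_affineSpan ℝ s)
  have hint : interior s = Set.univ := by
    rw [← hs.interior_closure_eq_interior_of_nonempty_interior
      (hs.interior_nonempty_iff_affineSpan_eq_top.2 hspan), hd.closure_eq, interior_univ]
  exact Set.eq_univ_of_univ_subset (hint ▸ interior_subset)

theorem PointedCone.dense_hull_of_forall_inner_nonpos {E : Type*} [NormedAddCommGroup E]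
    [InnerProductSpace ℝ E] [CompleteSpace E] {s : Set E}
    (h : ∀ y, (∀ x ∈ s, ⟪x, y⟫ ≤ 0) → y = 0) : Dense (PointedCone.hull ℝ s : Set E) := by
  let K : ProperCone ℝ E := ⟨(PointedCone.hull ℝ s).closure, isClosed_closure⟩
  refine dense_iff_closure_eq.2 (Set.eq_univ_of_forall fun x => by_contra fun hx => ?_)
  obtain ⟨y, hK, hxy⟩ := K.hyperplane_separation' (x₀ := x) hx
  have : -y = 0 := h _ fun z hz => by
    simpa [inner_neg_right] using hK z (subset_closure (PointedCone.subset_hull hz))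
  simp_all

section Polyhedron

variable {d N : ℕ} (a : Fin N → EuclideanSpace ℝ (Fin d))

theorem zero_mem_Qset_zero : (0 : EuclideanSpace ℝ (Fin d)) ∈ Qset a 0 := fun i => by
  simp

variable {a}

theorem add_smul_mem_Qset {b : Fin N → ℝ} {x y : EuclideanSpace ℝ (Fin d)} (hx : x ∈ Qset a b)
    (hy : y ∈ Qset a 0) {t : ℝ} (ht : 0 ≤ t) : x + t • y ∈ Qset a b := fun i => by
  have := mul_nonpos_of_nonneg_of_nonpos ht (hy i)
  rw [inner_add_right, real_inner_smul_right]
  linarith [hx i]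

theorem not_isBounded_Qset {b : Fin N → ℝ} (hne : (Qset a b).Nonempty)
    {y : EuclideanSpace ℝ (Fin d)} (hy : y ∈ Qset a 0) (hy0 : y ≠ 0) :
    ¬ Bornology.IsBounded (Qset a b) :=
  not_isBounded_of_forall_add_smul_mem hy0 fun _ ht => add_smul_mem_Qset hne.some_mem hy ht

theorem Qset_zero_eq_of_forall_isBounded (h : ∀ S ∈ GA a, Bornology.IsBounded S) :
    Qset a 0 = {0} := by
  have hne : (Qset a 0).Nonempty := ⟨0, zero_mem_Qset_zero a⟩
  refine Set.eq_singleton_iff_unique_mem.2 ⟨zero_mem_Qset_zero a, fun y hy => ?_⟩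
  by_contra hy0
  exact not_isBounded_Qset hne hy hy0 (h _ ⟨⟨0, rfl⟩, hne⟩)

theorem inner_le_of_mem_Qstar {b : Fin N → ℝ} {c x : EuclideanSpace ℝ (Fin d)} {p : Fin N → ℝ}
    (hp : p ∈ Qstar a c) (hx : x ∈ Qset a b) : ⟪c, x⟫ ≤ ∑ i, p i * b i := by
  rw [← hp.2, sum_inner]
  exact Finset.sum_le_sum fun i _ => by
    rw [real_inner_smul_left]; exact mul_le_mul_of_nonneg_left (hx i) (hp.1 i)

theorem isBounded_Qset_of_forall_Qstar_nonempty (h : ∀ c, (Qstar a c).Nonempty) (b : Fin N → ℝ) :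
    Bornology.IsBounded (Qset a b) :=
  isBounded_of_forall_bddAbove_inner fun c =>
    ⟨_, Set.forall_mem_image.2 fun _ hx => inner_le_of_mem_Qstar (h c).some_mem hx⟩

theorem Qstar_nonempty_of_Qset_zero_eq (h : Qset a 0 = {0}) (c : EuclideanSpace ℝ (Fin d)) :
    (Qstar a c).Nonempty := by
  have hdual : ∀ y, (∀ x ∈ Set.range a, ⟪x, y⟫ ≤ 0) → y = 0 := fun y hy => by
    have hy' : y ∈ Qset a 0 := fun i => hy _ ⟨i, rfl⟩
    rwa [h, Set.mem_singleton_iff] at hy'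
  have hdense := PointedCone.dense_hull_of_forall_inner_nonpos hdual
  have hc : c ∈ PointedCone.hull ℝ (Set.range a) := by
    rw [← SetLike.mem_coe, (PointedCone.convex _).eq_univ_of_dense hdense]; trivial
  obtain ⟨p, hp⟩ := (Submodule.mem_span_range_iff_exists_fun _).1 hc
  exact ⟨fun i => p i, fun i => (p i).2, hp⟩

end Polyhedron

theorem stmt_3_general (d N : ℕ)
    (a : Fin N → EuclideanSpace ℝ (Fin d)) :
    ((∀ S ∈ GA a, ¬ Bornology.IsBounded S) ∨ (∀ S ∈ GA a, Bornology.IsBounded S)) ∧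
    ((∀ S ∈ GA a, Bornology.IsBounded S) ↔ Qset a 0 = {0}) ∧
    ((∀ S ∈ GA a, Bornology.IsBounded S) ↔ ∀ c : EuclideanSpace ℝ (Fin d), (Qstar a c).Nonempty) := by
  have hbdd : (∀ c, (Qstar a c).Nonempty) → ∀ S ∈ GA a, Bornology.IsBounded S := by
    rintro h S ⟨⟨b, rfl⟩, -⟩
    exact isBounded_Qset_of_forall_Qstar_nonempty h b
  refine ⟨?_, ⟨Qset_zero_eq_of_forall_isBounded, fun h => hbdd (Qstar_nonempty_of_Qset_zero_eq h)⟩,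
    ⟨fun h => Qstar_nonempty_of_Qset_zero_eq (Qset_zero_eq_of_forall_isBounded h), hbdd⟩⟩
  by_cases h0 : Qset a 0 = {0}
  · exact Or.inr (hbdd (Qstar_nonempty_of_Qset_zero_eq h0))
  · obtain ⟨y, hy, hy0⟩ : ∃ y ∈ Qset a 0, y ≠ 0 := by
      by_contra! h
      exact h0 (Set.eq_singleton_iff_unique_mem.2 ⟨zero_mem_Qset_zero a, h⟩)
    left
    rintro S ⟨⟨b, rfl⟩, hne⟩
    exact not_isBounded_Qset hne hy hy0

theorem stmt_3 (d N : ℕ) (hd : 1 ≤ d) (hN : 1 ≤ N)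
    (a : Fin N → EuclideanSpace ℝ (Fin d))
    (ha_inj : Function.Injective a) (ha_norm : ∀ i, ‖a i‖ = 1) :
    ((∀ S ∈ GA a, ¬ Bornology.IsBounded S) ∨ (∀ S ∈ GA a, Bornology.IsBounded S)) ∧
    ((∀ S ∈ GA a, Bornology.IsBounded S) ↔ Qset a 0 = {0}) ∧
    ((∀ S ∈ GA a, Bornology.IsBounded S) ↔ ∀ c : EuclideanSpace ℝ (Fin d), (Qstar a c).Nonempty) :=
  stmt_3_general d N a
end
end

section
/- The family G_A is a cone (i.e., closed under multiplication of its members by every scalar λ ≥ 0, where λQ := {λx : x ∈ Q}) if and only if every member of G_A is bounded. -/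
/-!
Both conditions are equivalent to `Q_{A,0} = {0}`, where `Q_{A,0}`, the recession cone of every
`Q_{A,b}`, is itself a member of `G_A`. If `G_A` is a cone, it contains `0 • Q_{A,0} = {0}`, and
`{0} = Q_{A,b}` forces `b ≥ 0`, hence `Q_{A,0} ⊆ {0}`; conversely `λ • Q_{A,b} = Q_{A,λb}` for
`λ > 0` and `0 • Q_{A,b} = {0} = Q_{A,0}`. A bounded cone is `{0}`; conversely, if
`Q_{A,0} = {0}`, the positively homogeneous function `g x = ∑ᵢ max ⟪aᵢ, x⟫ 0` is at least some
`m > 0` on the unit sphere, so `m ‖x‖ ≤ g x ≤ ∑ᵢ max bᵢ 0` on `Q_{A,b}`.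
-/

open scoped RealInnerProductSpace Pointwise

noncomputable section

theorem eq_zero_of_isBounded_of_smul_mem {E : Type*} [NormedAddCommGroup E]
    [NormedSpace ℝ E] {S : Set E} (hS : Bornology.IsBounded S)
    (hsmul : ∀ t : ℝ, 0 ≤ t → ∀ x ∈ S, t • x ∈ S) {x : E} (hx : x ∈ S) : x = 0 := by
  obtain ⟨C, hC⟩ := isBounded_iff_forall_norm_le.mp hS
  by_contra hx0
  have hpos : 0 < ‖x‖ := norm_pos_iff.mpr hx0
  have hC0 : 0 ≤ C := (norm_nonneg x).trans (hC x hx)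
  have ht : 0 ≤ (C + 1) / ‖x‖ := by positivity
  have := hC _ (hsmul _ ht x hx)
  rw [norm_smul, Real.norm_of_nonneg ht, div_mul_cancel₀ _ hpos.ne'] at this
  linarith

namespace Qset

variable {d N : ℕ} {a : Fin N → EuclideanSpace ℝ (Fin d)}

theorem zero_mem_iff {b : Fin N → ℝ} : 0 ∈ Qset a b ↔ 0 ≤ b := by
  simp [Qset, Pi.le_def]

theorem mono {b b' : Fin N → ℝ} (h : b ≤ b') : Qset a b ⊆ Qset a b' :=
  fun _ hx i => (hx i).trans (h i)

theorem mem_GA_zero : Qset a 0 ∈ GA a :=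
  ⟨⟨0, rfl⟩, 0, zero_mem_iff.mpr le_rfl⟩

theorem smul_mem_zero {t : ℝ} (ht : 0 ≤ t) {x : EuclideanSpace ℝ (Fin d)}
    (hx : x ∈ Qset a 0) : t • x ∈ Qset a 0 := fun i => by
  simpa [real_inner_smul_right] using mul_nonpos_of_nonneg_of_nonpos ht (hx i)

theorem smul_eq {t : ℝ} (ht : 0 < t) (b : Fin N → ℝ) : t • Qset a b = Qset a (t • b) := by
  ext x
  simp only [Set.mem_smul_set_iff_inv_smul_mem₀ ht.ne', Qset, Set.mem_ofPred_eq,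
    real_inner_smul_right, Pi.smul_apply, smul_eq_mul, inv_mul_le_iff₀ ht]

theorem zero_eq_singleton_of_isBounded (h : Bornology.IsBounded (Qset a 0)) :
    Qset a 0 = {0} :=
  Set.eq_singleton_iff_unique_mem.mpr ⟨zero_mem_iff.mpr le_rfl, fun _ hx =>
    eq_zero_of_isBounded_of_smul_mem h (fun _ ht _ => smul_mem_zero ht) hx⟩

theorem isBounded_of_zero_eq_singleton (h0 : Qset a 0 = {0}) (b : Fin N → ℝ) :
    Bornology.IsBounded (Qset a b) := by
  set g : EuclideanSpace ℝ (Fin d) → ℝ := fun x => ∑ i, max ⟪a i, x⟫ 0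
  have hg_smul : ∀ t : ℝ, 0 ≤ t → ∀ x, g (t • x) = t * g x := fun t ht x => by
    simp only [g, real_inner_smul_right, Finset.mul_sum, mul_max_of_nonneg _ _ ht, mul_zero]
  have hg_pos : ∀ v ∈ Metric.sphere (0 : EuclideanSpace ℝ (Fin d)) 1, 0 < g v := by
    intro v hv
    by_contra hgv
    have hv0 : v ∈ Qset a 0 := fun i => by
      have := (Finset.sum_eq_zero_iff_of_nonneg (fun j _ => le_max_right _ _)).mp
        (le_antisymm (not_lt.mp hgv) (by positivity)) i (Finset.mem_univ i)
      simpa using (le_max_left _ _).trans this.le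
    rw [h0, Set.mem_singleton_iff] at hv0
    simp [hv0] at hv
  obtain ⟨m, hm, hmg⟩ := (isCompact_sphere 0 1).exists_forall_le'
    (by fun_prop : Continuous g).continuousOn hg_pos
  refine isBounded_iff_forall_norm_le.mpr ⟨(∑ i, max (b i) 0) / m, fun x hx => ?_⟩
  rw [le_div_iff₀ hm]
  calc ‖x‖ * m ≤ g x := by
        rcases eq_or_ne x 0 with rfl | hx0
        · simp [g]
        · have hu := hmg (‖x‖⁻¹ • x) (mem_sphere_zero_iff_norm.mpr (norm_smul_inv_norm hx0))
          rwa [hg_smul _ (by positivity), le_inv_mul_iff₀ (norm_pos_iff.mpr hx0)] at hu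
    _ ≤ ∑ i, max (b i) 0 := Finset.sum_le_sum fun i _ => max_le_max (hx i) le_rfl

end Qset

open Qset

theorem forall_isBounded_GA_iff {d N : ℕ} (a : Fin N → EuclideanSpace ℝ (Fin d)) :
    (∀ S ∈ GA a, Bornology.IsBounded S) ↔ Qset a 0 = {0} := by
  refine ⟨fun h => zero_eq_singleton_of_isBounded (h _ mem_GA_zero), ?_⟩
  rintro h0 _ ⟨⟨b, rfl⟩, -⟩
  exact isBounded_of_zero_eq_singleton h0 b

theorem forall_smul_mem_GA_iff {d N : ℕ} (a : Fin N → EuclideanSpace ℝ (Fin d)) :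
    (∀ t : ℝ, 0 ≤ t → ∀ S ∈ GA a, t • S ∈ GA a) ↔ Qset a 0 = {0} := by
  have hzero : (0 : ℝ) • Qset a 0 = {0} :=
    (Set.zero_smul_set mem_GA_zero.2).trans Set.singleton_zero.symm
  constructor
  · intro hcone
    obtain ⟨⟨b, hb⟩, -⟩ := hcone 0 le_rfl _ mem_GA_zero
    rw [hzero] at hb
    have hb0 : 0 ≤ b := zero_mem_iff.mp (hb ▸ Set.mem_singleton 0)
    exact Set.eq_singleton_iff_unique_mem.mpr ⟨zero_mem_iff.mpr le_rfl,
      fun x hx => by simpa [← hb] using mono hb0 hx⟩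
  · rintro h0 t ht _ ⟨⟨b, rfl⟩, hne⟩
    rcases ht.eq_or_lt with rfl | htpos
    · rw [Set.zero_smul_set hne, ← Set.singleton_zero, ← h0]
      exact mem_GA_zero
    · exact ⟨⟨t • b, smul_eq htpos b⟩, hne.smul_set⟩

theorem stmt_4_general (d N : ℕ)
    (a : Fin N → EuclideanSpace ℝ (Fin d)) :
    (∀ lam : ℝ, 0 ≤ lam → ∀ S ∈ GA a, lam • S ∈ GA a) ↔
      (∀ S ∈ GA a, Bornology.IsBounded S) :=
  (forall_smul_mem_GA_iff a).trans (forall_isBounded_GA_iff a).symm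

theorem stmt_4 (d N : ℕ) (hd : 1 ≤ d) (hN : 1 ≤ N)
    (a : Fin N → EuclideanSpace ℝ (Fin d))
    (ha_inj : Function.Injective a) (ha_norm : ∀ i, ‖a i‖ = 1) :
    (∀ lam : ℝ, 0 ≤ lam → ∀ S ∈ GA a, lam • S ∈ GA a) ↔
      (∀ S ∈ GA a, Bornology.IsBounded S) :=
  stmt_4_general d N a
end
end

section
/- For b ∈ ℝ^N, one has b ∈ C_A if and only if both of the following hold: (i) 0 ≤ bᵀp for every p ∈ Q⋄_{A,0}; and (ii) b_i ≤ bᵀp for every i ∈ {1,…,N} and every p ∈ Q*_{A,a_i}. -/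
open scoped RealInnerProductSpace

noncomputable section

section Cone

variable {E : Type*} [NormedAddCommGroup E] [InnerProductSpace ℝ E]

/-- The cone generated by finitely many vectors. -/
def coneSet {n : ℕ} (v : Fin n → E) : Set E :=
  {x | ∃ c : Fin n → ℝ, (∀ i, 0 ≤ c i) ∧ ∑ i, c i • v i = x}

/-- Conic Carathéodory: reduce to a linearly independent subfamily. -/
lemma coneReduce {n : ℕ} (v : Fin n → E) (s : Finset (Fin n)) :
    ∀ c : Fin n → ℝ, (∀ i, 0 ≤ c i) → (∀ i ∉ s, c i = 0) →
    ∃ t : Finset (Fin n), LinearIndependent ℝ (fun i : t => v i) ∧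
      ∃ c' : Fin n → ℝ, (∀ i, 0 ≤ c' i) ∧ (∀ i ∉ t, c' i = 0) ∧
        ∑ i, c' i • v i = ∑ i, c i • v i := by
  classical
  induction s using Finset.strongInduction with
  | _ s ih =>
  intro c hc hcs
  by_cases hli : LinearIndependent ℝ (fun i : s => v i)
  · exact ⟨s, hli, c, hc, hcs, rfl⟩
  obtain ⟨g, hg, j0, hj0⟩ := Fintype.not_linearIndependent_iff.mp hli
  set g' : Fin n → ℝ := fun i => if h : i ∈ s then g ⟨i, h⟩ else 0 with hg'def
  have hg'sum : ∑ i, g' i • v i = 0 := by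
    rw [← Finset.sum_subset (Finset.subset_univ s)
      (fun i _ hi => by simp [g', hi])]
    rw [← Finset.sum_attach s (fun i => g' i • v i)]
    rw [← hg]
    rw [← Finset.univ_eq_attach]
    exact Finset.sum_congr rfl (fun i _ => by simp [g', i.2])
  have hg'z : ∀ i ∉ s, g' i = 0 := fun i hi => by simp [g', hi]
  have hgj0 : g' (j0 : Fin n) = g j0 := by simp [g', j0.2]
  obtain ⟨h, hsum0, hz, i1, hi1⟩ :
      ∃ h : Fin n → ℝ, ∑ i, h i • v i = 0 ∧ (∀ i ∉ s, h i = 0) ∧ ∃ i, 0 < h i := by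
    rcases lt_or_gt_of_ne (show g' (j0 : Fin n) ≠ 0 by rw [hgj0]; exact hj0) with hlt | hgt
    · refine ⟨-g', by simp [neg_smul, Finset.sum_neg_distrib, hg'sum], fun i hi => by
        simp [hg'z i hi], (j0 : Fin n), by simpa using hlt⟩
    · exact ⟨g', hg'sum, hg'z, (j0 : Fin n), hgt⟩
  have hi1s : i1 ∈ s := by
    by_contra hmem
    rw [hz i1 hmem] at hi1
    exact lt_irrefl 0 hi1
  set P := s.filter (fun i => 0 < h i) with hP
  have hPne : P.Nonempty := ⟨i1, Finset.mem_filter.mpr ⟨hi1s, hi1⟩⟩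
  obtain ⟨i0, hi0P, hi0min⟩ := Finset.exists_min_image P (fun i => c i / h i) hPne
  have hi0s : i0 ∈ s := (Finset.mem_filter.mp hi0P).1
  have hi0pos : 0 < h i0 := (Finset.mem_filter.mp hi0P).2
  set lam := c i0 / h i0 with hlam
  have hlam0 : 0 ≤ lam := div_nonneg (hc i0) hi0pos.le
  set c2 : Fin n → ℝ := fun i => c i - lam * h i with hc2def
  have hc2nn : ∀ i, 0 ≤ c2 i := by
    intro i
    rcases le_or_gt (h i) 0 with hh | hh
    · have hmul : lam * h i ≤ 0 := mul_nonpos_of_nonneg_of_nonpos hlam0 hh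
      have := hc i
      simp only [c2]
      linarith
    · have his : i ∈ s := by
        by_contra hmem
        rw [hz i hmem] at hh
        exact lt_irrefl 0 hh
      have hmin := hi0min i (Finset.mem_filter.mpr ⟨his, hh⟩)
      have hmul : lam * h i ≤ c i := by
        rw [hlam]
        exact (le_div_iff₀ hh).mp hmin
      simp only [c2]
      linarith
  have hc2i0 : c2 i0 = 0 := by
    simp only [c2, hlam]
    rw [div_mul_cancel₀ _ hi0pos.ne']
    ring
  have hc2z : ∀ i ∉ s.erase i0, c2 i = 0 := by
    intro i hi
    by_cases h1 : i = i0
    · rw [h1]; exact hc2i0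
    · have his : i ∉ s := fun hs => hi (Finset.mem_erase.mpr ⟨h1, hs⟩)
      simp only [c2, hcs i his, hz i his]
      ring
  have hsum2 : ∑ i, c2 i • v i = ∑ i, c i • v i := by
    simp only [c2, sub_smul, Finset.sum_sub_distrib]
    have : ∑ i, (lam * h i) • v i = lam • ∑ i, h i • v i := by
      rw [Finset.smul_sum]
      exact Finset.sum_congr rfl fun i _ => (smul_smul lam (h i) (v i)).symm
    rw [this, hsum0, smul_zero, sub_zero]
  obtain ⟨t, hli', c', h1, h2, h3⟩ :=
    ih (s.erase i0) (Finset.erase_ssubset hi0s) c2 hc2nn hc2z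
  exact ⟨t, hli', c', h1, h2, h3.trans hsum2⟩

/-- The linear map sending coefficients to the combination. -/
def combo {ι : Type*} [Fintype ι] (w : ι → E) : (ι → ℝ) →ₗ[ℝ] E where
  toFun c := ∑ i, c i • w i
  map_add' x y := by simp [add_smul, Finset.sum_add_distrib]
  map_smul' m x := by simp [Finset.smul_sum, smul_smul]

lemma isClosed_subCone {n : ℕ} [FiniteDimensional ℝ E] (v : Fin n → E) (t : Finset (Fin n))
    (hli : LinearIndependent ℝ (fun i : t => v i)) :
    IsClosed {x : E | ∃ c : Fin n → ℝ, (∀ i, 0 ≤ c i) ∧ (∀ i ∉ t, c i = 0) ∧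
      ∑ i, c i • v i = x} := by
  classical
  set L := combo (fun i : t => v i) with hLdef
  have hker : LinearMap.ker L = ⊥ := by
    rw [LinearMap.ker_eq_bot']
    intro m hm
    exact funext (Fintype.linearIndependent_iff.mp hli m hm)
  have hemb := LinearMap.isClosedEmbedding_of_injective hker
  have hclosed : IsClosed {c : t → ℝ | ∀ i, 0 ≤ c i} := by
    have : {c : t → ℝ | ∀ i, 0 ≤ c i} = ⋂ i, {c | 0 ≤ c i} := by
      ext; simp [Set.mem_iInter]
    rw [this]
    exact isClosed_iInter fun i => isClosed_le continuous_const (continuous_apply i)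
  have himg := hemb.isClosedMap _ hclosed
  have hset : {x : E | ∃ c : Fin n → ℝ, (∀ i, 0 ≤ c i) ∧ (∀ i ∉ t, c i = 0) ∧
      ∑ i, c i • v i = x} = L '' {c : t → ℝ | ∀ i, 0 ≤ c i} := by
    ext x
    constructor
    · rintro ⟨c, hc, hct, rfl⟩
      refine ⟨fun i => c i, fun i => hc i, ?_⟩
      show ∑ i : t, c i • v i = _
      rw [Finset.univ_eq_attach, Finset.sum_attach t (fun i => c i • v i)]
      exact Finset.sum_subset (Finset.subset_univ t)
        (fun i _ hi => by rw [hct i hi, zero_smul])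
    · rintro ⟨c, hc, rfl⟩
      refine ⟨fun i => if h : i ∈ t then c ⟨i, h⟩ else 0,
        fun i => by
          by_cases h : i ∈ t
          · simp only [h, dif_pos]; exact hc _
          · simp [h], fun i hi => by simp [hi], ?_⟩
      rw [← Finset.sum_subset (Finset.subset_univ t)
        (fun i _ hi => by simp [hi])]
      rw [← Finset.sum_attach t
        (fun i => (if h : i ∈ t then c ⟨i, h⟩ else 0) • v i)]
      show _ = ∑ i : t, c i • v i
      rw [← Finset.univ_eq_attach]
      exact Finset.sum_congr rfl fun i _ => by simp [i.2]
  rw [hset]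
  exact himg

lemma isClosed_coneSet {n : ℕ} [FiniteDimensional ℝ E] (v : Fin n → E) :
    IsClosed (coneSet v) := by
  classical
  have hunion : coneSet v =
      ⋃ t : {t : Finset (Fin n) // LinearIndependent ℝ (fun i : t => v i)},
        {x : E | ∃ c : Fin n → ℝ, (∀ i, 0 ≤ c i) ∧ (∀ i ∉ (t : Finset (Fin n)), c i = 0) ∧
          ∑ i, c i • v i = x} := by
    ext x
    simp only [Set.mem_iUnion]
    constructor
    · rintro ⟨c, hc, rfl⟩
      obtain ⟨t, hli, c', h1, h2, h3⟩ := coneReduce v Finset.univ c hc (by simp)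
      exact ⟨⟨t, hli⟩, c', h1, h2, h3⟩
    · rintro ⟨t, c, h1, h2, h3⟩
      exact ⟨c, h1, h3⟩
  rw [hunion]
  exact isClosed_iUnion_of_finite fun t => isClosed_subCone v t t.2

/-- The cone generated by finitely many vectors, as a convex cone. -/
def coneCone {n : ℕ} (w : Fin n → E) : ConvexCone ℝ E where
  carrier := coneSet w
  smul_mem' := by
    rintro r hr x ⟨c, hc, rfl⟩
    refine ⟨fun i => r * c i, fun i => mul_nonneg hr.le (hc i), ?_⟩
    rw [Finset.smul_sum]
    exact Finset.sum_congr rfl fun i _ => (smul_smul r (c i) (w i)).symm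
  add_mem' := by
    rintro x ⟨c, hc, rfl⟩ y ⟨c2, hc2, rfl⟩
    exact ⟨c + c2, fun i => add_nonneg (hc i) (hc2 i), by
      simp [add_smul, Finset.sum_add_distrib]⟩

lemma zero_mem_coneSet {n : ℕ} (w : Fin n → E) : (0 : E) ∈ coneSet w :=
  ⟨fun _ => 0, fun _ => le_refl 0, by simp⟩

lemma self_mem_coneSet {n : ℕ} (w : Fin n → E) (k : Fin n) : w k ∈ coneSet w := by
  classical
  refine ⟨fun k' => if k' = k then 1 else 0, fun k' => by positivity, ?_⟩
  simp [ite_smul]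

/-- Farkas' lemma, feasibility version. -/
lemma farkas {E : Type*} [NormedAddCommGroup E] [InnerProductSpace ℝ E]
    [FiniteDimensional ℝ E] {n : ℕ} (v : Fin n → E) (c : Fin n → ℝ)
    (h : ∀ y : Fin n → ℝ, (∀ i, 0 ≤ y i) → ∑ i, y i • v i = 0 → 0 ≤ ∑ i, y i * c i) :
    ∃ x : E, ∀ i, ⟪v i, x⟫ ≤ c i := by
  classical
  set L : (E × ℝ) ≃ₗ[ℝ] WithLp 2 (E × ℝ) := (WithLp.linearEquiv 2 ℝ (E × ℝ)).symm with hLdef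
  set u : Fin (n + 1) → E × ℝ := Fin.snoc (fun j => (v j, c j)) ((0 : E), (1 : ℝ)) with hu
  set w : Fin (n + 1) → WithLp 2 (E × ℝ) := fun k => L (u k) with hw
  have husum : ∀ y : Fin (n + 1) → ℝ, ∑ k, y k • u k =
      (∑ j, y j.castSucc • v j, (∑ j, y j.castSucc * c j) + y (Fin.last n)) := by
    intro y
    rw [Fin.sum_univ_castSucc]
    simp only [u, Fin.snoc_castSucc, Fin.snoc_last, Prod.smul_mk, smul_eq_mul, smul_zero,
      mul_one]
    ext <;> simp [Prod.fst_sum, Prod.snd_sum]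
  by_cases hmem : L ((0 : E), (-1 : ℝ)) ∈ coneSet w
  · obtain ⟨y, hy, hsum⟩ := hmem
    have heq : ∑ k, y k • u k = ((0 : E), (-1 : ℝ)) := by
      apply L.injective
      rw [map_sum]
      rw [← hsum]
      exact Finset.sum_congr rfl fun k _ => (L.map_smul (y k) (u k))
    rw [husum] at heq
    have h1 : ∑ j, y j.castSucc • v j = 0 := congrArg Prod.fst heq
    have h2 : (∑ j, y j.castSucc * c j) + y (Fin.last n) = -1 := congrArg Prod.snd heq
    have h3 := h (fun j => y j.castSucc) (fun j => hy _) h1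
    have h4 : 0 ≤ y (Fin.last n) := hy _
    linarith
  · have hne : ((coneCone w : ConvexCone ℝ (WithLp 2 (E × ℝ))) : Set (WithLp 2 (E × ℝ))).Nonempty :=
      ⟨0, zero_mem_coneSet w⟩
    have hcl : IsClosed ((coneCone w : ConvexCone ℝ (WithLp 2 (E × ℝ))) :
        Set (WithLp 2 (E × ℝ))) := isClosed_coneSet w
    obtain ⟨z, hz1, hz2⟩ :=
      ProperCone.hyperplane_separation' (E := WithLp 2 (E × ℝ))
        ({ carrier := coneSet w, add_mem' := fun hx hy => (coneCone w).add_mem' hx hy,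
           zero_mem' := zero_mem_coneSet w,
           smul_mem' := fun r x hx => by
             obtain ⟨c, hc, rfl⟩ := hx
             refine ⟨fun i => (r : ℝ) * c i, fun i => mul_nonneg r.2 (hc i), ?_⟩
             change _ = (r : ℝ) • ∑ i, c i • w i
             rw [Finset.smul_sum]
             exact Finset.sum_congr rfl fun i _ => (smul_smul (r : ℝ) (c i) (w i)).symm,
           isClosed' := hcl } : ProperCone ℝ (WithLp 2 (E × ℝ))) hmem
    have hz2' : z.snd > 0 := by
      rw [WithLp.prod_inner_apply, WithLp.ofLp_fst, WithLp.ofLp_snd, WithLp.ofLp_fst,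
        WithLp.ofLp_snd] at hz2
      have hfst : (L ((0 : E), (-1 : ℝ))).fst = (0 : E) := rfl
      have hsnd : (L ((0 : E), (-1 : ℝ))).snd = (-1 : ℝ) := rfl
      rw [hfst, hsnd] at hz2
      simp only [inner_zero_right, inner_zero_left, RCLike.inner_apply, conj_trivial] at hz2
      linarith
    have key : ∀ j : Fin n, 0 ≤ ⟪v j, z.fst⟫ + c j * z.snd := by
      intro j
      have hmemj := hz1 _ (self_mem_coneSet w j.castSucc)
      rw [WithLp.prod_inner_apply, WithLp.ofLp_fst, WithLp.ofLp_snd, WithLp.ofLp_fst,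
        WithLp.ofLp_snd] at hmemj
      have hfst : (w j.castSucc).fst = v j := by
        show (u j.castSucc).fst = v j
        simp [u]
      have hsnd : (w j.castSucc).snd = c j := by
        show (u j.castSucc).snd = c j
        simp [u]
      rw [hfst, hsnd] at hmemj
      simpa [RCLike.inner_apply, mul_comm] using hmemj
    refine ⟨(-(z.snd)⁻¹) • z.fst, fun j => ?_⟩
    rw [real_inner_smul_right]
    have hj := key j
    have hzne : z.snd ≠ 0 := ne_of_gt hz2'
    rw [← mul_le_mul_iff_of_pos_right hz2']
    have : -(z.snd)⁻¹ * ⟪v j, z.fst⟫ * z.snd = -⟪v j, z.fst⟫ := by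
      field_simp
    rw [this]
    linarith

end Cone

/-- `Q⋄_{A,0} = {q ∈ ℝ^N : q ≥ 0, Aᵀq = 0, Σ q_i = 1}`. -/
def Qdiam {d N : ℕ} (a : Fin N → EuclideanSpace ℝ (Fin d)) : Set (Fin N → ℝ) :=
  {q | (∀ i, 0 ≤ q i) ∧ ∑ i, q i • a i = 0 ∧ ∑ i, q i = 1}

theorem stmt_5 (d N : ℕ) (hd : 1 ≤ d) (hN : 1 ≤ N)
    (a : Fin N → EuclideanSpace ℝ (Fin d))
    (ha_inj : Function.Injective a) (ha_norm : ∀ i, ‖a i‖ = 1)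
    (b : Fin N → ℝ) :
    b ∈ CA a ↔
      ((∀ p ∈ Qdiam a, 0 ≤ ∑ i, b i * p i) ∧
       (∀ i, ∀ p ∈ Qstar a (a i), b i ≤ ∑ j, b j * p j)) := by
  constructor
  · intro hb
    constructor
    · intro q hq
      obtain ⟨x, hx, -⟩ := hb ⟨0, hN⟩
      obtain ⟨hq0, hqa, hq1⟩ := hq
      have h2 : ∑ i, q i * ⟪a i, x⟫ = 0 := by
        have hs : ⟪∑ i, q i • a i, x⟫ = ∑ i, q i * ⟪a i, x⟫ := by
          rw [sum_inner]
          exact Finset.sum_congr rfl fun i _ => real_inner_smul_left (a i) x (q i)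
        rw [hqa] at hs
        simpa using hs.symm
      calc (0 : ℝ) = ∑ i, q i * ⟪a i, x⟫ := h2.symm
        _ ≤ ∑ i, b i * q i := by
            refine Finset.sum_le_sum fun i _ => ?_
            have := hx i
            nlinarith [hq0 i]
    · intro i p hp
      obtain ⟨x, hx, hxi⟩ := hb i
      obtain ⟨hp0, hpa⟩ := hp
      have h2 : ⟪a i, x⟫ = ∑ j, p j * ⟪a j, x⟫ := by
        rw [← hpa, sum_inner]
        exact Finset.sum_congr rfl fun j _ => real_inner_smul_left (a j) x (p j)
      rw [← hxi, h2]
      refine Finset.sum_le_sum fun j _ => ?_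
      have := hx j
      nlinarith [hp0 j]
  · rintro ⟨h1, h2⟩ i
    classical
    set v : Fin (N + 1) → EuclideanSpace ℝ (Fin d) := Fin.snoc a (-(a i)) with hv
    set cc : Fin (N + 1) → ℝ := Fin.snoc b (-(b i)) with hcc
    have hcert : ∀ y : Fin (N + 1) → ℝ, (∀ k, 0 ≤ y k) →
        ∑ k, y k • v k = 0 → 0 ≤ ∑ k, y k * cc k := by
      intro y hy hsum
      rw [Fin.sum_univ_castSucc] at hsum
      simp only [v, Fin.snoc_castSucc, Fin.snoc_last] at hsum
      rw [Fin.sum_univ_castSucc]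
      simp only [cc, Fin.snoc_castSucc, Fin.snoc_last]
      by_contra hneg
      push_neg at hneg
      rcases eq_or_lt_of_le (hy (Fin.last N)) with hμ0 | hμpos
      · have hsa : ∑ j, y j.castSucc • a j = 0 := by
          rw [← hμ0, zero_smul, add_zero] at hsum
          exact hsum
        have hsb : ∑ j, y j.castSucc * b j < 0 := by
          rw [← hμ0] at hneg
          simpa using hneg
        have hs0 : (0 : ℝ) ≤ ∑ j, y (Fin.castSucc j) := Finset.sum_nonneg fun j _ => hy _
        rcases eq_or_lt_of_le hs0 with hs | hs
        · have hall : ∀ j ∈ Finset.univ, y (Fin.castSucc j) = (0 : ℝ) :=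
            (Finset.sum_eq_zero_iff_of_nonneg fun j _ => hy _).mp hs.symm
          have : ∑ j, y j.castSucc * b j = 0 :=
            Finset.sum_eq_zero fun j hj => by rw [hall j hj, zero_mul]
          linarith
        · set s : ℝ := ∑ j, y (Fin.castSucc j) with hsdef
          have hspos : 0 < s := hs
          have hq : (fun j => y j.castSucc / s) ∈ Qdiam a := by
            refine ⟨fun j => div_nonneg (hy _) hspos.le, ?_, ?_⟩
            · have : ∑ j, (y j.castSucc / s) • a j = s⁻¹ • ∑ j, y j.castSucc • a j := by
                rw [Finset.smul_sum]
                exact Finset.sum_congr rfl fun j _ => by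
                  rw [smul_smul, div_eq_inv_mul]
              rw [this, hsa, smul_zero]
            · rw [← Finset.sum_div, ← hsdef, div_self hspos.ne']
          have hq2 := h1 _ hq
          have : ∑ j, b j * (y j.castSucc / s) = (∑ j, y j.castSucc * b j) / s := by
            rw [Finset.sum_div]
            exact Finset.sum_congr rfl fun j _ => by ring
          rw [this] at hq2
          have := div_neg_of_neg_of_pos hsb hspos
          linarith
      · set μ : ℝ := y (Fin.last N) with hμdef
        have hμp : 0 < μ := hμpos
        have hsa : ∑ j, y j.castSucc • a j = μ • a i := by
          have h0 : ∑ j, y j.castSucc • a j + μ • (-(a i)) = 0 := hsum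
          rw [smul_neg] at h0
          linear_combination (norm := module) h0
        have hsb : ∑ j, y j.castSucc * b j < μ * b i := by
          have h0 : (∑ j, y j.castSucc * b j) + μ * (-(b i)) < 0 := hneg
          linarith
        have hp : (fun j => y j.castSucc / μ) ∈ Qstar a (a i) := by
          refine ⟨fun j => div_nonneg (hy _) hμp.le, ?_⟩
          have : ∑ j, (y j.castSucc / μ) • a j = μ⁻¹ • ∑ j, y j.castSucc • a j := by
            rw [Finset.smul_sum]
            exact Finset.sum_congr rfl fun j _ => by rw [smul_smul, div_eq_inv_mul]
          rw [this, hsa, smul_smul, inv_mul_cancel₀ hμp.ne', one_smul]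
        have hp2 := h2 i _ hp
        have heq : ∑ j, b j * (y j.castSucc / μ) = (∑ j, y j.castSucc * b j) / μ := by
          rw [Finset.sum_div]
          exact Finset.sum_congr rfl fun j _ => by ring
        rw [heq] at hp2
        have : (∑ j, y j.castSucc * b j) / μ < b i := by
          rw [div_lt_iff₀ hμp]
          linarith
        linarith
    obtain ⟨x, hx⟩ := farkas v cc hcert
    have hmem : x ∈ Qset a b := by
      intro j
      have := hx j.castSucc
      simpa [v, cc] using this
    refine ⟨x, hmem, ?_⟩
    have hlast := hx (Fin.last N)
    simp only [v, cc, Fin.snoc_last, inner_neg_left, neg_le_neg_iff] at hlast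
    have hle := hmem i
    linarith
end
end

section
/- The set C_A is a closed convex cone in ℝ^N; that is, C_A is closed (with respect to any norm on ℝ^N, e.g. ‖·‖_∞), convex, and satisfies λb ∈ C_A for every b ∈ C_A and every λ ≥ 0. -/
/-!
`C_A` is the intersection over `i` of the sets of right-hand sides `b` for which `A x ≤ b` has a
solution that is tight in row `i`. Each of them is the sum of the column space of `A` and the face
`{r ≥ 0, r i = 0}` of the nonnegative orthant, hence a finitely generated cone. By Carathéodory's
theorem for cones, a finitely generated cone is a finite union of simplicial cones, and these are
closed as images of an orthant under injective linear maps.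
-/

open scoped RealInnerProductSpace

noncomputable section

open Finset

namespace PointedCone

section Caratheodory

variable {E ι : Type*} [AddCommGroup E] [Module ℝ E]

theorem mem_hull_image_finset_iff {v : ι → E} {s : Finset ι} {x : E} :
    x ∈ hull ℝ (v '' s) ↔
      ∃ c : ι → ℝ, (∀ i ∈ s, 0 ≤ c i) ∧ ∑ i ∈ s, c i • v i = x := by
  constructor
  · intro hx
    obtain ⟨c, rfl⟩ := (Submodule.mem_span_image_finset_iff_exists_fun' _).1 hx
    exact ⟨fun i => c i, fun i _ => (c i).2, rfl⟩
  · rintro ⟨c, hc, rfl⟩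
    exact Submodule.sum_mem _ fun i hi =>
      smul_mem _ (hc i hi) (subset_hull ⟨i, hi, rfl⟩)

variable [DecidableEq ι]

/-- A linear dependence among the generators lets one drop a generator: move along the
dependence until the first coefficient reaches zero. -/
theorem exists_mem_hull_erase_of_not_linearIndepOn {v : ι → E} {s : Finset ι} {x : E}
    (hv : ¬LinearIndepOn ℝ v s) (hx : x ∈ hull ℝ (v '' s)) :
    ∃ i ∈ s, x ∈ hull ℝ (v '' (s.erase i)) := by
  obtain ⟨c, hc, rfl⟩ := mem_hull_image_finset_iff.1 hx
  have hg : ∃ g : ι → ℝ, ∑ i ∈ s, g i • v i = 0 ∧ ∃ i ∈ s, 0 < g i := by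
    obtain ⟨g, hg, i, hi, hgi⟩ := not_linearIndepOn_finset_iff.1 hv
    rcases hgi.lt_or_gt with hneg | hpos
    · exact ⟨-g, by simp [neg_smul, hg], i, hi, neg_pos.2 hneg⟩
    · exact ⟨g, hg, i, hi, hpos⟩
  obtain ⟨g, hg, hpos⟩ := hg
  obtain ⟨i₀, hi₀, hmin⟩ :=
    (s.filter fun i => 0 < g i).exists_min_image (fun i => c i / g i)
      (by simpa [Finset.Nonempty] using hpos)
  rw [mem_filter] at hi₀
  set ρ := c i₀ / g i₀
  have hρ : 0 ≤ ρ := div_nonneg (hc i₀ hi₀.1) hi₀.2.le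
  refine ⟨i₀, hi₀.1, mem_hull_image_finset_iff.2 ⟨fun i => c i - ρ * g i, ?_, ?_⟩⟩
  · intro i hi
    rw [sub_nonneg]
    rcases lt_or_ge 0 (g i) with hgi | hgi
    · exact (le_div_iff₀ hgi).1 (hmin i (mem_filter.2 ⟨(mem_erase.1 hi).2, hgi⟩))
    · exact (mul_nonpos_of_nonneg_of_nonpos hρ hgi).trans (hc i (mem_erase.1 hi).2)
  · have hzero : (c i₀ - ρ * g i₀) • v i₀ = 0 := by
      rw [div_mul_cancel₀ _ hi₀.2.ne', sub_self, zero_smul]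
    rw [sum_erase s (f := fun i => (c i - ρ * g i) • v i) hzero]
    simp only [sub_smul, sum_sub_distrib, mul_smul, ← smul_sum, hg, smul_zero, sub_zero]

/-- Carathéodory's theorem for cones. -/
theorem exists_linearIndepOn_of_mem_hull {v : ι → E} {s : Finset ι} {x : E}
    (hx : x ∈ hull ℝ (v '' s)) :
    ∃ t ⊆ s, LinearIndepOn ℝ v t ∧ x ∈ hull ℝ (v '' t) := by
  induction s using Finset.strongInduction with
  | H s ih =>
    by_cases hv : LinearIndepOn ℝ v s
    · exact ⟨s, subset_rfl, hv, hx⟩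
    · obtain ⟨i, hi, hxi⟩ := exists_mem_hull_erase_of_not_linearIndepOn hv hx
      obtain ⟨t, hts, ht, hxt⟩ := ih _ (erase_ssubset hi) hxi
      exact ⟨t, hts.trans (erase_subset _ _), ht, hxt⟩

end Caratheodory

section Topology

variable {E ι : Type*} [AddCommGroup E] [Module ℝ E] [TopologicalSpace E]
  [IsTopologicalAddGroup E] [ContinuousSMul ℝ E] [T2Space E]

theorem isClosed_hull_image_of_linearIndepOn {v : ι → E} {s : Finset ι}
    (hv : LinearIndepOn ℝ v s) : IsClosed (hull ℝ (v '' s) : Set E) := by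
  have hemb := LinearMap.isClosedEmbedding_of_injective
    (LinearMap.ker_eq_bot.2 hv.fintypeLinearCombination_injective)
  have : (hull ℝ (v '' s) : Set E) =
      Fintype.linearCombination ℝ (fun i : s => v i) '' {c | ∀ i, 0 ≤ c i} := by
    ext x
    simp only [SetLike.mem_coe, Set.mem_image, Set.mem_ofPred_eq,
      Fintype.linearCombination_apply]
    constructor
    · intro hx
      obtain ⟨c, hc, rfl⟩ := mem_hull_image_finset_iff.1 hx
      exact ⟨fun i => c i, fun i => hc i i.2, s.sum_coe_sort fun i => c i • v i⟩
    · rintro ⟨c, hc, rfl⟩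
      exact Submodule.sum_mem _ fun i _ => smul_mem _ (hc i) (subset_hull ⟨i, i.2, rfl⟩)
  rw [this, Set.ofPred_forall]
  exact hemb.isClosedMap _
    (isClosed_iInter fun i => isClosed_le continuous_const (continuous_apply i))

theorem FG.isClosed {C : PointedCone ℝ E} (hC : C.FG) : IsClosed (C : Set E) := by
  classical
  obtain ⟨s, rfl⟩ := hC
  have : (hull ℝ (id '' (s : Set E)) : Set E) = ⋃ t ∈ s.powerset.filter fun t : Finset E =>
      LinearIndepOn ℝ id (t : Set E), (hull ℝ (id '' (t : Set E)) : Set E) := by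
    ext x
    simp only [SetLike.mem_coe, Set.mem_iUnion, mem_filter, mem_powerset, exists_prop]
    constructor
    · intro hx
      obtain ⟨t, hts, ht, hxt⟩ := exists_linearIndepOn_of_mem_hull hx
      exact ⟨t, ⟨hts, ht⟩, hxt⟩
    · rintro ⟨t, ⟨hts, -⟩, hxt⟩
      exact Submodule.span_mono (Set.image_mono (coe_subset.2 hts)) hxt
  rw [← Set.image_id (s : Set E), this]
  exact isClosed_biUnion_finset fun t ht =>
    isClosed_hull_image_of_linearIndepOn (mem_filter.1 ht).2

end Topology

end PointedCone

/-- Makes every finitely generated subspace a finitely generated cone. -/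
instance Real.moduleFinite_nonneg : Module.Finite {c : ℝ // 0 ≤ c} ℝ := by
  refine ⟨Submodule.fg_def.2 ⟨{1, -1}, by simp, eq_top_iff.2 fun r _ => ?_⟩⟩
  refine Submodule.mem_span_pair.2
    ⟨⟨max r 0, le_max_right _ _⟩, ⟨max (-r) 0, le_max_right _ _⟩, ?_⟩
  simp only [Nonneg.mk_smul, smul_eq_mul, mul_one, mul_neg]
  rw [← sub_eq_add_neg, max_zero_sub_max_neg_zero_eq_self]

section TightCone

variable {F ι : Type*} [AddCommGroup F] [Module ℝ F] [Fintype ι] [DecidableEq ι]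

open PointedCone

theorem mem_hull_single_erase_iff {i : ι} {r : ι → ℝ} :
    r ∈ hull ℝ ((Pi.single · 1) '' ↑(univ.erase i)) ↔ 0 ≤ r ∧ r i = 0 := by
  constructor
  · intro hr
    have : hull ℝ ((Pi.single · (1 : ℝ)) '' ↑(univ.erase i)) ≤
        positive ℝ (ι → ℝ) ⊓ ofSubmodule (LinearMap.ker (LinearMap.proj i)) := by
      refine Submodule.span_le.2 ?_
      rintro _ ⟨j, hj, rfl⟩
      exact ⟨Pi.single_nonneg.2 zero_le_one, Pi.single_eq_of_ne (mem_erase.1 hj).1.symm _⟩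
    exact this hr
  · rintro ⟨hr, hri⟩
    refine mem_hull_image_finset_iff.2 ⟨r, fun j _ => hr j, ?_⟩
    rw [sum_erase univ (by rw [hri, zero_smul])]
    simp only [← Pi.single_smul, smul_eq_mul, mul_one, univ_sum_single]

def tightCone (L : F →ₗ[ℝ] ι → ℝ) (i : ι) : PointedCone ℝ (ι → ℝ) :=
  ofSubmodule (LinearMap.range L) ⊔ hull ℝ ((Pi.single · 1) '' ↑(univ.erase i))

theorem mem_tightCone_iff {L : F →ₗ[ℝ] ι → ℝ} {i : ι} {b : ι → ℝ} :
    b ∈ tightCone L i ↔ ∃ x, L x ≤ b ∧ L x i = b i := by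
  simp only [tightCone, Submodule.mem_sup, mem_hull_single_erase_iff]
  constructor
  · rintro ⟨_, ⟨x, rfl⟩, r, ⟨hr, hri⟩, rfl⟩
    exact ⟨x, le_add_of_nonneg_right hr, by simp [hri]⟩
  · rintro ⟨x, hxb, hxi⟩
    exact ⟨L x, ⟨x, rfl⟩, b - L x, ⟨sub_nonneg.2 hxb, by simp [hxi]⟩,
      add_sub_cancel _ _⟩

theorem isClosed_tightCone (L : F →ₗ[ℝ] ι → ℝ) (i : ι) :
    IsClosed (tightCone L i : Set (ι → ℝ)) :=
  FG.isClosed <|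
    (IsNoetherian.noetherian _).restrictScalars.sup (Submodule.fg_span (Set.toFinite _))

end TightCone

theorem CA_eq_iInf_tightCone {d N : ℕ} (a : Fin N → EuclideanSpace ℝ (Fin d)) :
    CA a = ↑(⨅ i, tightCone (LinearMap.pi fun j => innerₛₗ ℝ (a j)) i) := by
  ext b
  simp only [CA, Qset, SetLike.mem_coe, Submodule.mem_iInf, mem_tightCone_iff, Pi.le_def]
  rfl

theorem stmt_7_general (d N : ℕ)
    (a : Fin N → EuclideanSpace ℝ (Fin d)) :
    IsClosed (CA a) ∧ Convex ℝ (CA a) ∧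
      (∀ b ∈ CA a, ∀ lam : ℝ, 0 ≤ lam → lam • b ∈ CA a) := by
  rw [CA_eq_iInf_tightCone]
  refine ⟨?_, PointedCone.convex _, fun b hb lam hlam => PointedCone.smul_mem _ hlam hb⟩
  rw [Submodule.coe_iInf]
  exact isClosed_iInter fun i => isClosed_tightCone _ i

theorem stmt_7 (d N : ℕ) (hd : 1 ≤ d) (hN : 1 ≤ N)
    (a : Fin N → EuclideanSpace ℝ (Fin d))
    (ha_inj : Function.Injective a) (ha_norm : ∀ i, ‖a i‖ = 1) :
    IsClosed (CA a) ∧ Convex ℝ (CA a) ∧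
      (∀ b ∈ CA a, ∀ lam : ℝ, 0 ≤ lam → lam • b ∈ CA a) :=
  stmt_7_general d N a
end
end

section
/- Let k ∈ {1,…,N}, and let p and p̃ be extreme points of Q*_{A,a_k}, both different from e_k, such that cone({a_i : i ∈ I*_p}) is strictly contained in cone({a_i : i ∈ I*_{p̃}}). Then the inequality b_k ≤ bᵀp̃ is redundant in the system of extreme-point inequalities: every b ∈ ℝ^N satisfying b_i ≤ bᵀq for all i ∈ {1,…,N} and all extreme points q of Q*_{A,a_i} with (i,q) ≠ (k,p̃) also satisfies b_k ≤ bᵀp̃. -/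
open scoped RealInnerProductSpace

noncomputable section

/-- `cone({a_i : i ∈ I})`: all nonnegative linear combinations of the `a_i`, `i ∈ I`. -/
def coneOf {d N : ℕ} (a : Fin N → EuclideanSpace ℝ (Fin d)) (I : Set (Fin N)) :
    Set (EuclideanSpace ℝ (Fin d)) :=
  {x | ∃ lam : Fin N → ℝ, (∀ i, 0 ≤ lam i) ∧ (∀ i, i ∉ I → lam i = 0) ∧ ∑ i, lam i • a i = x}

/-!
The columns of `A` on the support of an extreme point of `{p ≥ 0 : Aᵀp = c}` are linearly
independent. Hence such a point is the only nonnegative representation of `c` supported in its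
support, and every nonnegative representation of another vector supported there is again an
extreme point. In particular an extreme point `p ≠ e_k` of `Q*_{A,a_k}` has `p_k = 0`.

Since `cone(I*_p) ⊆ cone(I*_p̃)`, each `a_i` with `p_i > 0` has a nonnegative representation `λⁱ`
supported in `I*_p̃`; it is an extreme point of `Q*_{A,a_i}`, and `i ≠ k`. The mixture `∑ pᵢ λⁱ`
represents `a_k` inside `I*_p̃`, so it is `p̃`. The strict inclusion forces `p ≠ p̃`, so
`b_k ≤ bᵀp = ∑ pᵢ bᵢ ≤ ∑ pᵢ bᵀλⁱ = bᵀp̃`.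
-/

open Function Filter Topology

theorem linearIndepOn_iff_of_fintype {R M ι : Type*} [Ring R] [AddCommGroup M] [Module R M]
    [Fintype ι] {v : ι → M} {s : Set ι} :
    LinearIndepOn R v s ↔
      ∀ g : ι → R, support g ⊆ s → Fintype.linearCombination R v g = 0 → g = 0 := by
  rw [linearIndepOn_iff]
  refine ⟨fun h g hgs hg => ?_, fun h l hls hl => ?_⟩
  · have := h ((Finsupp.linearEquivFunOnFinite R R ι).symm g)
      ((Finsupp.mem_supported R _).2 fun j hj => hgs (by simpa using hj))
      (by rwa [Finsupp.linearCombination_eq_fintype_linearCombination_apply])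
    simpa using congrArg (⇑) this
  · have := h l ((Finsupp.mem_supported R _).1 hls |>.trans' (by simp))
      (by simpa [← Finsupp.linearCombination_eq_fintype_linearCombination_apply] using hl)
    exact DFunLike.coe_injective this

theorem LinearIndepOn.eq_of_linearCombination_eq {R M ι : Type*} [Ring R] [AddCommGroup M]
    [Module R M] [Fintype ι] {v : ι → M} {s : Set ι} (hv : LinearIndepOn R v s)
    {g g' : ι → R} (hg : support g ⊆ s) (hg' : support g' ⊆ s)
    (h : Fintype.linearCombination R v g = Fintype.linearCombination R v g') : g = g' :=
  sub_eq_zero.1 <| linearIndepOn_iff_of_fintype.1 hv _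
    ((support_sub g g').trans (Set.union_subset hg hg')) (by rw [map_sub, h, sub_self])

theorem support_subset_of_mem_openSegment {ι : Type*} {p x y : ι → ℝ} (hx : 0 ≤ x) (hy : 0 ≤ y)
    (h : p ∈ openSegment ℝ x y) : support x ⊆ support p := by
  obtain ⟨s, t, hs, ht, -, rfl⟩ := h
  intro j hxj
  have hxj : 0 < x j := (hx j).lt_of_ne' hxj
  have : 0 < s * x j + t * y j := by nlinarith [mul_nonneg ht.le (hy j)]
  simpa using this.ne'

section NonnegReprs

variable {ι E : Type*} [Fintype ι] [AddCommGroup E] [Module ℝ E] {a : ι → E} {c c' : E}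
  {p q : ι → ℝ}

def nonnegReprs (a : ι → E) (c : E) : Set (ι → ℝ) :=
  {p | 0 ≤ p ∧ Fintype.linearCombination ℝ a p = c}

theorem Qstar_eq_nonnegReprs {d N : ℕ} (a : Fin N → EuclideanSpace ℝ (Fin d))
    (c : EuclideanSpace ℝ (Fin d)) : Qstar a c = nonnegReprs a c :=
  rfl

theorem single_mem_nonnegReprs [DecidableEq ι] (i : ι) : Pi.single i 1 ∈ nonnegReprs a (a i) :=
  ⟨by simp [Pi.single_nonneg], by simp⟩

theorem linearIndepOn_support_of_mem_extremePoints (hp : p ∈ (nonnegReprs a c).extremePoints ℝ) :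
    LinearIndepOn ℝ a (support p) := by
  refine linearIndepOn_iff_of_fintype.2 fun z hz hz0 => ?_
  -- `z` vanishes off `support p`, so `p ± t • z` stays nonnegative for small `t`.
  have hnear : ∀ᶠ t in 𝓝 (0 : ℝ), p + t • z ∈ nonnegReprs a c := by
    refine (eventually_all.2 fun j => ?_).mono fun t ht => ⟨ht, ?_⟩
    · by_cases hpj : p j = 0
      · simp [hpj, notMem_support.1 fun hj => hz hj hpj]
      · have hcont : Continuous fun t : ℝ => p j + t * z j := by fun_prop
        filter_upwards [continuousAt_const.eventually_lt hcont.continuousAt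
          (show (0 : ℝ) < p j + 0 * z j by simpa using (hp.1.1 j).lt_of_ne' hpj)] with t ht
        simpa using ht.le
    · rw [map_add, map_smul, hz0, smul_zero, add_zero, hp.1.2]
  have hnear' : ∀ᶠ t in 𝓝 (0 : ℝ), p - t • z ∈ nonnegReprs a c := by
    simpa [sub_eq_add_neg] using (continuous_neg.tendsto' (0 : ℝ) 0 neg_zero).eventually hnear
  obtain ⟨t, ⟨hadd, hsub⟩, ht⟩ :=
    ((hnear.and hnear').filter_mono nhdsWithin_le_nhds |>.and self_mem_nhdsWithin).exists
      (f := 𝓝[≠] 0)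
  have htz : p + t • z = p := hp.2 hadd hsub (mem_openSegment_add_sub p (t • z))
  exact (smul_eq_zero.1 (by simpa using htz)).resolve_left ht

theorem eq_of_mem_nonnegReprs_of_support_subset (hp : p ∈ (nonnegReprs a c).extremePoints ℝ)
    {q q' : ι → ℝ} (hq : q ∈ nonnegReprs a c') (hq' : q' ∈ nonnegReprs a c')
    (hqp : support q ⊆ support p) (hqp' : support q' ⊆ support p) : q = q' :=
  (linearIndepOn_support_of_mem_extremePoints hp).eq_of_linearCombination_eq hqp hqp'
    (hq.2.trans hq'.2.symm)

theorem mem_extremePoints_of_support_subset (hp : p ∈ (nonnegReprs a c).extremePoints ℝ)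
    (hq : q ∈ nonnegReprs a c') (hqp : support q ⊆ support p) :
    q ∈ (nonnegReprs a c').extremePoints ℝ :=
  ⟨hq, fun _ hx _ hy hseg => eq_of_mem_nonnegReprs_of_support_subset hp hx hq
    ((support_subset_of_mem_openSegment hx.1 hy.1 hseg).trans hqp) hqp⟩

theorem apply_eq_zero_of_mem_extremePoints [DecidableEq ι] {k : ι}
    (hp : p ∈ (nonnegReprs a (a k)).extremePoints ℝ) (hpk : p ≠ Pi.single k 1) : p k = 0 := by
  by_contra hk
  refine hpk (eq_of_mem_nonnegReprs_of_support_subset hp hp.1 (single_mem_nonnegReprs k)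
    subset_rfl (Pi.support_single_subset.trans ?_))
  simpa using hk

theorem sum_smul_mem_nonnegReprs {lam : ι → ι → ℝ} (hp : p ∈ nonnegReprs a c)
    (hlam : ∀ i ∈ support p, lam i ∈ nonnegReprs a (a i)) :
    ∑ i, p i • lam i ∈ nonnegReprs a c := by
  have hterm : ∀ i, 0 ≤ p i • lam i ∧
      p i • Fintype.linearCombination ℝ a (lam i) = p i • a i := by
    intro i
    by_cases hi : p i = 0
    · simp [hi]
    · exact ⟨smul_nonneg (hp.1 i) (hlam i hi).1, by rw [(hlam i hi).2]⟩
  refine ⟨Finset.sum_nonneg fun i _ => (hterm i).1, ?_⟩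
  simp only [map_sum, map_smul, fun i => (hterm i).2]
  exact hp.2

theorem support_sum_smul_subset {κ : Type*} {lam : ι → κ → ℝ} {T : Set κ}
    (h : ∀ i ∈ support p, support (lam i) ⊆ T) : support (∑ i, p i • lam i) ⊆ T := by
  rw [Finset.sum_fn]
  refine (Finset.support_sum _ _).trans (Set.iUnion₂_subset fun i _ => ?_)
  by_cases hi : p i = 0
  · simp [hi]
  · exact (support_const_smul_subset _ _).trans (h i hi)

end NonnegReprs

theorem setOf_pos_eq_support {ι : Type*} {q : ι → ℝ} (hq : 0 ≤ q) : {i | 0 < q i} = support q :=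
  Set.ext fun i => (hq i).lt_iff_ne'

theorem mem_coneOf_iff {d N : ℕ} {a : Fin N → EuclideanSpace ℝ (Fin d)} {I : Set (Fin N)}
    {x : EuclideanSpace ℝ (Fin d)} : x ∈ coneOf a I ↔ ∃ q ∈ nonnegReprs a x, support q ⊆ I :=
  ⟨fun ⟨q, hq0, hqI, hqx⟩ => ⟨q, ⟨hq0, hqx⟩, support_subset_iff'.2 hqI⟩,
    fun ⟨q, ⟨hq0, hqx⟩, hqI⟩ => ⟨q, hq0, support_subset_iff'.1 hqI, hqx⟩⟩

theorem stmt_10_general (d N : ℕ)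
    (a : Fin N → EuclideanSpace ℝ (Fin d))
    (k : Fin N) (p ptil : Fin N → ℝ)
    (hp : p ∈ (Qstar a (a k)).extremePoints ℝ) (hpe : p ≠ Pi.single k 1)
    (hptil : ptil ∈ (Qstar a (a k)).extremePoints ℝ)
    (hcone : coneOf a {i | 0 < p i} ⊂ coneOf a {i | 0 < ptil i}) :
    ∀ b : Fin N → ℝ,
      (∀ i : Fin N, ∀ q ∈ (Qstar a (a i)).extremePoints ℝ,
        (i, q) ≠ (k, ptil) → b i ≤ ∑ j, b j * q j) →
      b k ≤ ∑ j, b j * ptil j := by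
  intro b hb
  simp only [Qstar_eq_nonnegReprs] at hp hptil hb
  rw [setOf_pos_eq_support hp.1.1, setOf_pos_eq_support hptil.1.1] at hcone
  have hrepr : ∀ i ∈ support p, ∃ q ∈ nonnegReprs a (a i), support q ⊆ support ptil := fun i hi =>
    mem_coneOf_iff.1 <| hcone.1 <| mem_coneOf_iff.2
      ⟨_, single_mem_nonnegReprs i, Pi.support_single_subset.trans (by simpa using hi)⟩
  choose! lam hlam hlam_supp using hrepr
  have hsum : ∑ i, p i • lam i = ptil :=
    eq_of_mem_nonnegReprs_of_support_subset hptil (sum_smul_mem_nonnegReprs hp.1 hlam) hptil.1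
      (support_sum_smul_subset hlam_supp) subset_rfl
  have hpk : p k = 0 := apply_eq_zero_of_mem_extremePoints hp hpe
  have hbi : ∀ i ∈ support p, b i ≤ b ⬝ᵥ lam i := fun i hi =>
    hb i _ (mem_extremePoints_of_support_subset hptil (hlam i hi) (hlam_supp i hi))
      fun h => hi (by rw [(Prod.mk.inj h).1, hpk])
  have hbk : b k ≤ b ⬝ᵥ p :=
    hb k p hp fun h => hcone.ne (by rw [(Prod.mk.inj h).2])
  calc b k ≤ b ⬝ᵥ p := hbk
    _ = ∑ i, p i * b i := by simp only [dotProduct, mul_comm]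
    _ ≤ ∑ i, p i * (b ⬝ᵥ lam i) := Finset.sum_le_sum fun i _ => by
        by_cases hi : p i = 0
        · simp [hi]
        · exact mul_le_mul_of_nonneg_left (hbi i hi) (hp.1.1 i)
    _ = b ⬝ᵥ ptil := by simp only [← hsum, dotProduct_sum, dotProduct_smul, smul_eq_mul]

theorem stmt_10 (d N : ℕ) (hd : 1 ≤ d) (hN : 1 ≤ N)
    (a : Fin N → EuclideanSpace ℝ (Fin d))
    (ha_inj : Function.Injective a) (ha_norm : ∀ i, ‖a i‖ = 1)
    (k : Fin N) (p ptil : Fin N → ℝ)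
    (hp : p ∈ (Qstar a (a k)).extremePoints ℝ) (hpe : p ≠ Pi.single k 1)
    (hptil : ptil ∈ (Qstar a (a k)).extremePoints ℝ) (hptile : ptil ≠ Pi.single k 1)
    (hcone : coneOf a {i | 0 < p i} ⊂ coneOf a {i | 0 < ptil i}) :
    ∀ b : Fin N → ℝ,
      (∀ i : Fin N, ∀ q ∈ (Qstar a (a i)).extremePoints ℝ,
        (i, q) ≠ (k, ptil) → b i ≤ ∑ j, b j * q j) →
      b k ≤ ∑ j, b j * ptil j :=
  stmt_10_general d N a k p ptil hp hpe hptil hcone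
end
end

section
/- Let b ∈ C_A and let p be an extreme point of Q⋄_{A,0}. Then bᵀp = 0 if and only if Q_{A,b} ⊆ {x ∈ ℝ^d : a_iᵀx = b_i for all i ∈ I*_p}. -/
/-!
Since `Aᵀp = 0`, for every `x` the value `bᵀp` equals `Σ pᵢ (bᵢ - aᵢᵀx)`. For `x ∈ Q_{A,b}` this
is a sum of nonnegative terms, so it vanishes iff every constraint with `pᵢ > 0` is tight at `x`.
As `b ∈ C_A`, the polyhedron `Q_{A,b}` has a point, and the equivalence at that single point
already decides whether `bᵀp = 0`.
-/

open scoped RealInnerProductSpace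

noncomputable section

lemma sum_mul_eq_sum_mul_sub_inner {ι E : Type*} [Fintype ι] [NormedAddCommGroup E]
    [InnerProductSpace ℝ E] {a : ι → E} {q : ι → ℝ} (hq : ∑ i, q i • a i = 0)
    (b : ι → ℝ) (x : E) :
    ∑ i, b i * q i = ∑ i, q i * (b i - ⟪a i, x⟫) := by
  have hzero : ∑ i, q i * ⟪a i, x⟫ = 0 := by
    simp only [← real_inner_smul_left, ← sum_inner, hq, inner_zero_left]
  simp only [mul_sub, Finset.sum_sub_distrib, hzero, sub_zero, mul_comm]

lemma sum_mul_eq_zero_iff_of_nonneg {ι : Type*} [Fintype ι] {q s : ι → ℝ}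
    (hq : ∀ i, 0 ≤ q i) (hs : ∀ i, 0 ≤ s i) :
    ∑ i, q i * s i = 0 ↔ ∀ i, 0 < q i → s i = 0 := by
  rw [Finset.sum_eq_zero_iff_of_nonneg fun i _ => mul_nonneg (hq i) (hs i)]
  refine ⟨fun h i hqi => ?_, fun h i _ => ?_⟩
  · exact (mul_eq_zero.mp (h i (Finset.mem_univ i))).resolve_left hqi.ne'
  · rcases (hq i).lt_or_eq with hqi | hqi
    · rw [h i hqi, mul_zero]
    · rw [← hqi, zero_mul]

lemma sum_mul_eq_zero_iff_of_mem_Qset {d N : ℕ} {a : Fin N → EuclideanSpace ℝ (Fin d)}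
    {b q : Fin N → ℝ} {x : EuclideanSpace ℝ (Fin d)} (hq : q ∈ Qdiam a) (hx : x ∈ Qset a b) :
    ∑ i, b i * q i = 0 ↔ ∀ i, 0 < q i → ⟪a i, x⟫ = b i := by
  obtain ⟨hq_nonneg, hq_sum, -⟩ := hq
  rw [sum_mul_eq_sum_mul_sub_inner hq_sum b x,
    sum_mul_eq_zero_iff_of_nonneg hq_nonneg fun i => sub_nonneg.mpr (hx i)]
  exact forall₂_congr fun i _ => sub_eq_zero.trans eq_comm

theorem stmt_12_general (d N : ℕ) (hN : 1 ≤ N)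
    (a : Fin N → EuclideanSpace ℝ (Fin d))
    (b : Fin N → ℝ) (hb : b ∈ CA a)
    (p : Fin N → ℝ) (hp : p ∈ (Qdiam a).extremePoints ℝ) :
    ∑ i, b i * p i = 0 ↔
      Qset a b ⊆ {x | ∀ i, 0 < p i → ⟪a i, x⟫ = b i} := by
  obtain ⟨x, hx, -⟩ := hb ⟨0, hN⟩
  exact ⟨fun h _ hy => (sum_mul_eq_zero_iff_of_mem_Qset hp.1 hy).mp h,
    fun hsub => (sum_mul_eq_zero_iff_of_mem_Qset hp.1 hx).mpr (hsub hx)⟩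

theorem stmt_12 (d N : ℕ) (hd : 1 ≤ d) (hN : 1 ≤ N)
    (a : Fin N → EuclideanSpace ℝ (Fin d))
    (ha_inj : Function.Injective a) (ha_norm : ∀ i, ‖a i‖ = 1)
    (b : Fin N → ℝ) (hb : b ∈ CA a)
    (p : Fin N → ℝ) (hp : p ∈ (Qdiam a).extremePoints ℝ) :
    ∑ i, b i * p i = 0 ↔
      Qset a b ⊆ {x | ∀ i, 0 < p i → ⟪a i, x⟫ = b i} :=
  stmt_12_general d N hN a b hb p hp
end
end

section
/- Let b ∈ C_A. Then the dimension of Q_{A,b} (the dimension of its affine hull) is at most d − 1 if and only if there exists an extreme point p of Q⋄_{A,0} with bᵀp = 0. -/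
/-!
If `q ∈ Q⋄_{A,0}` has `bᵀq = 0`, then for `x ∈ Q_{A,b}` the nonnegative slacks `q_i (b_i - a_iᵀx)`
sum to `bᵀq - (Aᵀq)ᵀx = 0`, so `Q_{A,b}` lies in the hyperplane `a_iᵀx = b_i` for any `i` with
`q_i > 0`. Conversely, if `dim Q_{A,b} < d` there is no Slater point, and separating the image of
the standard simplex under `q ↦ (Aᵀq, bᵀq)` from the ray `{0} × (-∞, 0]` yields `q ∈ Q⋄_{A,0}` with
`bᵀq ≤ 0`. Weak duality against a point of `Q_{A,b}` makes `bᵀ` nonnegative on `Q⋄_{A,0}`, so its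
minimum there is `0`, and by Krein–Milman applied to the exposed face of minimizers it is attained
at an extreme point.
-/

open scoped RealInnerProductSpace

noncomputable section

/-- The dimension of a convex subset of `ℝ^d`: the dimension of (the direction of)
its affine hull. -/
def convDim {d : ℕ} (S : Set (EuclideanSpace ℝ (Fin d))) : ℕ :=
  Module.finrank ℝ (affineSpan ℝ S).direction

section ExtremeMinimizer

variable {E : Type*} [AddCommGroup E] [Module ℝ E] [TopologicalSpace E] [T2Space E]
  [IsTopologicalAddGroup E] [ContinuousSMul ℝ E] [LocallyConvexSpace ℝ E]

theorem IsCompact.exists_mem_extremePoints_isMinOn {s : Set E} (hs : IsCompact s)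
    (hne : s.Nonempty) (l : StrongDual ℝ E) :
    ∃ x ∈ s.extremePoints ℝ, IsMinOn l s x := by
  have hface : IsExposed ℝ s ((-l).toExposed s) := ContinuousLinearMap.toExposed.isExposed
  obtain ⟨x₀, hx₀, hmin⟩ := hs.exists_isMinOn hne l.continuous.continuousOn
  obtain ⟨x, hx⟩ := (hface.isCompact hs).extremePoints_nonempty
    ⟨x₀, hx₀, fun y hy => by simpa using isMinOn_iff.1 hmin y hy⟩
  exact ⟨x, hface.isExtreme.extremePoints_subset_extremePoints hx,
    isMinOn_iff.2 fun y hy => by simpa using hx.1.2 y hy⟩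

end ExtremeMinimizer

section Polyhedron

variable {d N : ℕ} {a : Fin N → EuclideanSpace ℝ (Fin d)} {b : Fin N → ℝ}

theorem Qdiam_eq_stdSimplex_inter :
    Qdiam a = stdSimplex ℝ (Fin N) ∩ {q | ∑ i, q i • a i = 0} := by
  ext q
  simp only [Qdiam, stdSimplex, Set.mem_inter_iff, Set.mem_ofPred_eq]
  tauto

theorem isCompact_Qdiam : IsCompact (Qdiam a) := by
  rw [Qdiam_eq_stdSimplex_inter]
  exact (isCompact_stdSimplex ℝ (Fin N)).inter_right (isClosed_eq (by fun_prop) continuous_const)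

theorem sum_mul_sub_inner_eq {q : Fin N → ℝ} (hq : ∑ i, q i • a i = 0)
    (x : EuclideanSpace ℝ (Fin d)) :
    ∑ i, q i * (b i - ⟪a i, x⟫) = ∑ i, b i * q i := by
  have h : ∑ i, q i * ⟪a i, x⟫ = 0 := by
    simpa [sum_inner, real_inner_smul_left] using congrArg (⟪·, x⟫) hq
  simp only [mul_sub, Finset.sum_sub_distrib, h, sub_zero, mul_comm]

theorem sum_mul_nonneg_of_mem_Qset {x : EuclideanSpace ℝ (Fin d)} (hx : x ∈ Qset a b)
    {q : Fin N → ℝ} (hq : q ∈ Qdiam a) : 0 ≤ ∑ i, b i * q i := by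
  rw [← sum_mul_sub_inner_eq hq.2.1 x]
  exact Finset.sum_nonneg fun i _ => mul_nonneg (hq.1 i) (sub_nonneg.2 (hx i))

theorem inner_eq_of_mem_Qset_of_pos {q : Fin N → ℝ} (hq : q ∈ Qdiam a)
    (hbq : ∑ i, b i * q i = 0) {i : Fin N} (hqi : 0 < q i) {x : EuclideanSpace ℝ (Fin d)}
    (hx : x ∈ Qset a b) : ⟪a i, x⟫ = b i := by
  have hslack := (Finset.sum_eq_zero_iff_of_nonneg fun j _ =>
    mul_nonneg (hq.1 j) (sub_nonneg.2 (hx j))).1 ((sum_mul_sub_inner_eq hq.2.1 x).trans hbq) i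
      (Finset.mem_univ i)
  linarith [(mul_eq_zero.1 hslack).resolve_left hqi.ne']

theorem convDim_le_of_forall_inner_eq {S : Set (EuclideanSpace ℝ (Fin d))}
    {u : EuclideanSpace ℝ (Fin d)} (hu : u ≠ 0) {c : ℝ} (hS : ∀ x ∈ S, ⟪u, x⟫ = c) :
    convDim S ≤ d - 1 := by
  have hdir : (affineSpan ℝ S).direction ≤ (ℝ ∙ u)ᗮ := by
    rw [direction_affineSpan, vectorSpan_def, Submodule.span_le]
    rintro _ ⟨x, hx, y, hy, rfl⟩
    rw [SetLike.mem_coe, Submodule.mem_orthogonal_singleton_iff_inner_right]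
    change ⟪u, x - y⟫ = 0
    rw [inner_sub_right, hS x hx, hS y hy, sub_self]
  have hcompl := Submodule.finrank_add_finrank_orthogonal (ℝ ∙ u)
  rw [finrank_span_singleton hu, finrank_euclideanSpace_fin] at hcompl
  have := Submodule.finrank_mono hdir
  unfold convDim
  omega

theorem convDim_Qset_le_of_mem_Qdiam (ha : ∀ i, a i ≠ 0) {p : Fin N → ℝ} (hp : p ∈ Qdiam a)
    (hbp : ∑ i, b i * p i = 0) : convDim (Qset a b) ≤ d - 1 := by
  obtain ⟨i, -, hpi⟩ : ∃ i ∈ Finset.univ, (0 : ℝ) < p i :=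
    Finset.exists_lt_of_sum_lt (by simp [hp.2.2])
  exact convDim_le_of_forall_inner_eq (ha i) fun x hx => inner_eq_of_mem_Qset_of_pos hp hbp hpi hx

theorem convDim_Qset_eq_of_forall_inner_lt {x : EuclideanSpace ℝ (Fin d)}
    (hx : ∀ i, ⟪a i, x⟫ < b i) : convDim (Qset a b) = d := by
  have hopen : IsOpen {y : EuclideanSpace ℝ (Fin d) | ∀ i, ⟪a i, y⟫ < b i} := by
    simp only [Set.ofPred_forall]
    exact isOpen_iInter_of_finite fun i => isOpen_lt (by fun_prop) continuous_const
  have htop : affineSpan ℝ (Qset a b) = ⊤ := top_unique <|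
    hopen.affineSpan_eq_top ⟨x, hx⟩ ▸ affineSpan_mono ℝ fun y hy i => (hy i).le
  rw [convDim, htop, AffineSubspace.direction_top, finrank_top, finrank_euclideanSpace_fin]

theorem exists_mem_Qdiam_sum_mul_nonpos {x₀ : EuclideanSpace ℝ (Fin d)} (hx₀ : x₀ ∈ Qset a b)
    (hslater : ¬∃ x : EuclideanSpace ℝ (Fin d), ∀ i, ⟪a i, x⟫ < b i) :
    ∃ p ∈ Qdiam a, ∑ i, b i * p i ≤ 0 := by
  by_contra! hpos
  let L : (Fin N → ℝ) →ₗ[ℝ] EuclideanSpace ℝ (Fin d) × ℝ :=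
    (Fintype.linearCombination ℝ a).prod (Fintype.linearCombination ℝ b)
  have hL : ∀ p, L p = (∑ i, p i • a i, ∑ i, b i * p i) := fun p => by
    simp [L, Fintype.linearCombination_apply, mul_comm]
  have hdisj : Disjoint (L '' stdSimplex ℝ (Fin N)) ({0} ×ˢ Set.Iic 0) := by
    rw [Set.disjoint_left]
    rintro _ ⟨p, hp, rfl⟩ ⟨hA, hb⟩
    rw [hL] at hA hb
    exact (hpos p (Qdiam_eq_stdSimplex_inter ▸ ⟨hp, hA⟩)).not_ge hb
  obtain ⟨f, u, v, hfK, huv, hfC⟩ := geometric_hahn_banach_compact_closed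
    ((convex_stdSimplex ℝ (Fin N)).linear_image L)
    ((isCompact_stdSimplex ℝ (Fin N)).image L.continuous_of_finiteDimensional)
    ((convex_singleton 0).prod (convex_Iic 0)) (isClosed_singleton.prod isClosed_Iic) hdisj
  set s := f (0, 1)
  set w := (InnerProductSpace.toDual ℝ _).symm (f.comp (ContinuousLinearMap.inl ℝ _ ℝ))
  have hf : ∀ z t, f (z, t) = ⟪w, z⟫ + t * s := fun z t => by
    rw [InnerProductSpace.toDual_symm_apply, ContinuousLinearMap.comp_apply,
      ContinuousLinearMap.inl_apply, ← smul_eq_mul, ← map_smul, ← map_add]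
    simp
  have hv : v < 0 := by simpa [hf] using hfC (0, 0) ⟨rfl, Set.self_mem_Iic⟩
  have hs : s ≤ 0 := by
    by_contra! hs
    have := hfC (0, v / s) ⟨rfl, div_nonpos_of_nonpos_of_nonneg hv.le hs.le⟩
    rw [hf, inner_zero_right, zero_add, div_mul_cancel₀ v hs.ne'] at this
    exact this.false
  have hvertex : ∀ i, ⟪w, a i⟫ + b i * s < 0 := fun i => by
    have := hfK _ ⟨Pi.single i 1, single_mem_stdSimplex ℝ i, rfl⟩
    rw [hL, hf] at this
    simpa [Pi.single_apply] using this.trans (huv.trans hv)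
  -- `x₀` covers the case `s = 0` of a separating hyperplane parallel to the `t`-axis.
  refine hslater ⟨(1 - s)⁻¹ • (w + x₀), fun i => ?_⟩
  rw [real_inner_smul_right, inner_add_right, real_inner_comm w, inv_mul_lt_iff₀ (by linarith)]
  linarith [hvertex i, hx₀ i]

end Polyhedron

theorem stmt_13_general (d N : ℕ) (hd : 1 ≤ d) (hN : 1 ≤ N)
    (a : Fin N → EuclideanSpace ℝ (Fin d))
    (ha_norm : ∀ i, ‖a i‖ = 1)
    (b : Fin N → ℝ) (hb : b ∈ CA a) :
    convDim (Qset a b) ≤ d - 1 ↔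
      ∃ p ∈ (Qdiam a).extremePoints ℝ, ∑ i, b i * p i = 0 := by
  obtain ⟨x₀, hx₀, -⟩ := hb ⟨0, hN⟩
  constructor
  · intro hdim
    have hslater : ¬∃ x : EuclideanSpace ℝ (Fin d), ∀ i, ⟪a i, x⟫ < b i := fun ⟨x, hx⟩ => by
      have := convDim_Qset_eq_of_forall_inner_lt hx
      omega
    obtain ⟨p₁, hp₁, hbp₁⟩ := exists_mem_Qdiam_sum_mul_nonpos hx₀ hslater
    obtain ⟨p, hp, hmin⟩ := isCompact_Qdiam.exists_mem_extremePoints_isMinOn ⟨p₁, hp₁⟩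
      (LinearMap.toContinuousLinearMap (Fintype.linearCombination ℝ b))
    have hbp : ∑ i, b i * p i ≤ ∑ i, b i * p₁ i := by
      simpa [Fintype.linearCombination_apply, mul_comm] using isMinOn_iff.1 hmin p₁ hp₁
    exact ⟨p, hp, le_antisymm (hbp.trans hbp₁) (sum_mul_nonneg_of_mem_Qset hx₀ hp.1)⟩
  · rintro ⟨p, hp, hbp⟩
    exact convDim_Qset_le_of_mem_Qdiam (fun i => ne_zero_of_norm_ne_zero (by simp [ha_norm i]))
      hp.1 hbp

theorem stmt_13 (d N : ℕ) (hd : 1 ≤ d) (hN : 1 ≤ N)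
    (a : Fin N → EuclideanSpace ℝ (Fin d))
    (ha_inj : Function.Injective a) (ha_norm : ∀ i, ‖a i‖ = 1)
    (b : Fin N → ℝ) (hb : b ∈ CA a) :
    convDim (Qset a b) ≤ d - 1 ↔
      ∃ p ∈ (Qdiam a).extremePoints ℝ, ∑ i, b i * p i = 0 :=
  stmt_13_general d N hd hN a ha_norm b hb
end
end

section
/- Let b ∈ C_A, k ∈ {1,…,N}, and let p be an extreme point of Q*_{A,a_k} with p ≠ e_k. Then k ∉ I*_p, and bᵀp = b_k holds if and only if Q^k_{A,b} ⊆ {x ∈ ℝ^d : a_iᵀx = b_i for all i ∈ I*_p}, where Q^k_{A,b} := Q_{A,b} ∩ {x ∈ ℝ^d : a_kᵀx = b_k}. -/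
open scoped RealInnerProductSpace

noncomputable section

/-- The facet `Q^k_{A,b} = Q_{A,b} ∩ {x : a_kᵀx = b_k}`. -/
def Qfacet {d N : ℕ} (a : Fin N → EuclideanSpace ℝ (Fin d)) (b : Fin N → ℝ) (k : Fin N) :
    Set (EuclideanSpace ℝ (Fin d)) :=
  Qset a b ∩ {x | ⟪a k, x⟫ = b k}

theorem stmt_14 (d N : ℕ) (hd : 1 ≤ d) (hN : 1 ≤ N)
    (a : Fin N → EuclideanSpace ℝ (Fin d))
    (ha_inj : Function.Injective a) (ha_norm : ∀ i, ‖a i‖ = 1)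
    (b : Fin N → ℝ) (hb : b ∈ CA a) (k : Fin N)
    (p : Fin N → ℝ) (hp : p ∈ (Qstar a (a k)).extremePoints ℝ)
    (hpe : p ≠ Pi.single k 1) :
    k ∉ {i | 0 < p i} ∧
      (∑ i, b i * p i = b k ↔
        Qfacet a b k ⊆ {x | ∀ i, 0 < p i → ⟪a i, x⟫ = b i}) := by
  rw [mem_extremePoints] at hp
  have hpQ : p ∈ Qstar a (a k) := hp.1
  have hext := hp.2
  obtain ⟨hpnn, hpsum⟩ := hpQ
  have hsingle : ∑ i, ((Pi.single k 1 : Fin N → ℝ)) i • a i = a k := by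
    rw [Finset.sum_eq_single k]
    · simp
    · intro i _ hik; simp [Pi.single_apply, hik]
    · intro h; exact absurd (Finset.mem_univ k) h
  have hkey : ∀ x : EuclideanSpace ℝ (Fin d), ⟪a k, x⟫ = ∑ i, p i * ⟪a i, x⟫ := by
    intro x
    rw [← hpsum, sum_inner]
    exact Finset.sum_congr rfl fun i _ => real_inner_smul_left _ _ _
  constructor
  · -- k ∉ I*_p
    intro hk
    simp only [Set.mem_setOf_eq] at hk
    set ε : ℝ := min (p k) 1 with hε
    have hεpos : 0 < ε := lt_min hk one_pos
    have hε1 : ε ≤ 1 := min_le_right _ _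
    have hεk : ε ≤ p k := min_le_left _ _
    set s : Fin N → ℝ := Pi.single k 1 with hs
    have hsk : s k = 1 := Pi.single_eq_same k 1
    have hsumgen : ∀ t : ℝ, ∑ i, (p i + t * (p i - s i)) • a i = a k := by
      intro t
      have hterm : ∀ i, (p i + t * (p i - s i)) • a i
          = p i • a i + (t • (p i • a i) - t • (s i • a i)) := by
        intro i
        rw [smul_smul, smul_smul]
        module
      calc ∑ i, (p i + t * (p i - s i)) • a i
          = ∑ i, (p i • a i + (t • (p i • a i) - t • (s i • a i))) :=
            Finset.sum_congr rfl fun i _ => hterm i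
        _ = (∑ i, p i • a i) + ((∑ i, t • (p i • a i)) - ∑ i, t • (s i • a i)) := by
            rw [Finset.sum_add_distrib, Finset.sum_sub_distrib]
        _ = a k := by
            rw [← Finset.smul_sum, ← Finset.smul_sum, hpsum, hsingle, sub_self, add_zero]
    have hnn : ∀ (σ : ℝ), σ = 1 ∨ σ = -1 → ∀ i, 0 ≤ p i + (σ * ε) * (p i - s i) := by
      intro σ hσ i
      rcases eq_or_ne i k with rfl | hik
      · rw [hsk]
        rcases hσ with rfl | rfl <;> nlinarith [hpnn i]
      · have : s i = 0 := Pi.single_eq_of_ne hik 1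
        rw [this]
        rcases hσ with rfl | rfl <;> nlinarith [hpnn i]
    have hq₁ : (fun i => p i + ε * (p i - s i)) ∈ Qstar a (a k) := by
      refine ⟨fun i => ?_, hsumgen ε⟩
      have := hnn 1 (Or.inl rfl) i; simpa using this
    have hq₂ : (fun i => p i + (-ε) * (p i - s i)) ∈ Qstar a (a k) := by
      refine ⟨fun i => ?_, by simpa using hsumgen (-ε)⟩
      have := hnn (-1) (Or.inr rfl) i
      simpa [neg_mul] using this
    have hseg : p ∈ openSegment ℝ (fun i => p i + ε * (p i - s i))
        (fun i => p i + (-ε) * (p i - s i)) := by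
      refine ⟨1/2, 1/2, by norm_num, by norm_num, by norm_num, ?_⟩
      funext i
      simp only [Pi.add_apply, Pi.smul_apply, smul_eq_mul]
      ring
    have heq := (hext _ hq₁ _ hq₂ hseg).1
    apply hpe
    funext i
    have h := congrFun heq i
    have : p i - s i = 0 := by
      have hne : ε ≠ 0 := ne_of_gt hεpos
      replace h : ε * (p i - s i) = 0 := by linarith
      rcases mul_eq_zero.mp h with h' | h'
      · exact absurd h' hne
      · exact h'
    rw [hs] at this
    linarith [this]
  · constructor
    · -- forward
      intro hsum x hx
      obtain ⟨hx1, hx2⟩ := hx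
      have hle : ∀ i ∈ Finset.univ, p i * ⟪a i, x⟫ ≤ p i * b i :=
        fun i _ => mul_le_mul_of_nonneg_left (hx1 i) (hpnn i)
      have heq : ∑ i, p i * ⟪a i, x⟫ = ∑ i, p i * b i := by
        rw [← hkey x, hx2, ← hsum]
        exact Finset.sum_congr rfl fun i _ => mul_comm _ _
      intro i hpi
      have h := (Finset.sum_eq_sum_iff_of_le hle).mp heq i (Finset.mem_univ i)
      exact mul_left_cancel₀ (ne_of_gt hpi) h
    · -- backward
      intro hsub
      obtain ⟨x, hxQ, hxk⟩ := hb k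
      have hall := hsub ⟨hxQ, hxk⟩
      calc ∑ i, b i * p i = ∑ i, p i * ⟪a i, x⟫ := by
            refine Finset.sum_congr rfl fun i _ => ?_
            rcases (hpnn i).lt_or_eq with h | h
            · rw [hall i h]; ring
            · rw [← h]; ring
        _ = b k := by rw [← hkey, hxk]
end
end

section
/- Let b ∈ C_A and k ∈ {1,…,N}. If the dimension of Q^k_{A,b} := Q_{A,b} ∩ {x ∈ ℝ^d : a_kᵀx = b_k} is at most d − 2, then either the dimension of Q_{A,b} is at most d − 1, or there exists an extreme point p of Q*_{A,a_k} with p ≠ e_k and bᵀp = b_k. -/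
open scoped RealInnerProductSpace

noncomputable section

/-!
If `Q_{A,b}` is full-dimensional, it contains a point `z` with `a_iᵀz < b_i` for all `i`. Weak
duality against a point of the facet gives `bᵀp ≥ b_k` on `Q*_{A,a_k}`, so
`G = {p ∈ Q*_{A,a_k} : bᵀp = b_k}` is a face of `Q*_{A,a_k}`, and `z` makes it compact; it
contains `e_k`. If `G` were `{e_k}`, then by Farkas' lemma no inequality `j ≠ k` could be tight on
the whole facet `Q^k_{A,b}`; averaging gives a point of the facet at which all of them are
strict, so the facet spans the hyperplane `a_kᵀx = b_k` and has dimension `d - 1`. Hence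
`G ≠ {e_k}`, and Krein–Milman yields an extreme point of `G` other than `e_k`, which is extreme
in `Q*_{A,a_k}` because `G` is a face.
-/

open Set Filter Topology

section ConvexGeometry

variable {E : Type*}

theorem inner_add_mul_nonneg_of_forall_inner_le [NormedAddCommGroup E] [InnerProductSpace ℝ E]
    {ι : Type*} (u : ι → E) (β : ι → ℝ) (w : E) (γ : ℝ) (hfeas : ∃ x, ∀ i, ⟪u i, x⟫ ≤ β i)
    (h : ∀ x, (∀ i, ⟪u i, x⟫ ≤ β i) → ⟪w, x⟫ ≤ γ) {y : E} {s : ℝ} (hs : 0 ≤ s)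
    (hy : ∀ i, 0 ≤ ⟪y, u i⟫ + β i * s) : 0 ≤ ⟪y, w⟫ + γ * s := by
  obtain ⟨x₀, hx₀⟩ := hfeas
  rcases hs.eq_or_lt with rfl | hs
  · simp only [mul_zero, add_zero] at hy ⊢
    by_contra! hneg
    -- `x₀ - t • y` stays feasible for every `t ≥ 0`, but `⟪w, ·⟫` grows without bound along it
    obtain ⟨t, ht0, ht⟩ : ∃ t : ℝ, 0 ≤ t ∧ t * ⟪y, w⟫ = -(γ - ⟪w, x₀⟫ + 1) :=
      ⟨(γ - ⟪w, x₀⟫ + 1) / -⟪y, w⟫, div_nonneg (by linarith [h x₀ hx₀]) (neg_nonneg.mpr hneg.le),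
        by rw [div_neg, neg_mul, div_mul_cancel₀ _ hneg.ne]⟩
    have := h (x₀ - t • y) fun i => by
      rw [inner_sub_right, real_inner_smul_right, real_inner_comm y (u i)]
      nlinarith [hx₀ i, hy i]
    rw [inner_sub_right, real_inner_smul_right, real_inner_comm y w] at this
    linarith
  · have := h (-s⁻¹ • y) fun i => by
      rw [real_inner_smul_right, real_inner_comm y (u i), neg_mul, neg_le, ← div_eq_inv_mul,
        le_div_iff₀ hs]
      linarith [hy i]
    rw [real_inner_smul_right, real_inner_comm y w, neg_mul, neg_le, ← div_eq_inv_mul,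
      le_div_iff₀ hs] at this
    linarith

theorem ConcaveOn.isExtreme_sep_eq [AddCommGroup E] [Module ℝ E] {A : Set E} {f : E → ℝ}
    {m : ℝ} (hf : ConcaveOn ℝ A f) (hm : ∀ x ∈ A, m ≤ f x) :
    IsExtreme ℝ A {x ∈ A | f x = m} := by
  refine ⟨sep_subset _ _, ?_⟩
  rintro x₁ hx₁ x₂ hx₂ x ⟨-, hfx⟩ ⟨s, t, hs, ht, hst, rfl⟩
  have hconc := hf.2 hx₁ hx₂ hs.le ht.le hst
  rw [hfx, smul_eq_mul, smul_eq_mul] at hconc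
  have hm' : s * m + t * m = m := by rw [← add_mul, hst, one_mul]
  refine ⟨hx₁, le_antisymm ?_ (hm x₁ hx₁)⟩
  nlinarith [hm x₂ hx₂]

theorem IsCompact.exists_mem_extremePoints_ne [NormedAddCommGroup E] [NormedSpace ℝ E]
    {K : Set E} (hK : IsCompact K) (hconv : Convex ℝ K) {x y : E} (hy : y ∈ K) (hyx : y ≠ x) :
    ∃ e ∈ K.extremePoints ℝ, e ≠ x := by
  by_contra! h
  have hK : K ⊆ {x} := by
    rw [← closure_convexHull_extremePoints hK hconv]
    exact closure_minimal (convexHull_min h (convex_singleton x)) isClosed_singleton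
  exact hyx (hK hy)

theorem Convex.exists_forall_inner_lt [NormedAddCommGroup E] [InnerProductSpace ℝ E]
    {S : Set E} (hS : Convex ℝ S) (hne : S.Nonempty) {ι : Type*} [Fintype ι] (u : ι → E)
    (β : ι → ℝ) (hle : ∀ x ∈ S, ∀ i, ⟪u i, x⟫ ≤ β i) (hlt : ∀ i, ∃ x ∈ S, ⟪u i, x⟫ < β i) :
    ∃ x ∈ S, ∀ i, ⟪u i, x⟫ < β i := by
  choose y hyS hy using hlt
  obtain ⟨x₀, hx₀⟩ := hne
  let Y : Option ι → E := fun o => o.elim x₀ y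
  have hYS : ∀ o, Y o ∈ S := fun o => by cases o <;> simp [Y, hx₀, hyS]
  set w : ℝ := (Fintype.card (Option ι) : ℝ)⁻¹
  have hw : 0 < w := by positivity
  have hsum : ∑ _o : Option ι, w = 1 := by
    rw [Finset.sum_const, Finset.card_univ, nsmul_eq_mul, mul_inv_cancel₀ (by positivity)]
  refine ⟨∑ o, w • Y o, hS.sum_mem (fun _ _ => hw.le) hsum fun o _ => hYS o, fun i => ?_⟩
  calc ⟪u i, ∑ o, w • Y o⟫ = ∑ o, w * ⟪u i, Y o⟫ := by
        simp only [inner_sum, real_inner_smul_right]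
    _ < ∑ _o : Option ι, w * β i :=
        Finset.sum_lt_sum (fun o _ => mul_le_mul_of_nonneg_left (hle _ (hYS o) i) hw.le)
          ⟨some i, Finset.mem_univ _, mul_lt_mul_of_pos_left (hy i) hw⟩
    _ = β i := by rw [← Finset.sum_mul, hsum, one_mul]

theorem Convex.interior_nonempty_of_le_convDim {d : ℕ} {S : Set (EuclideanSpace ℝ (Fin d))}
    (hS : Convex ℝ S) (hne : S.Nonempty) (hdim : d ≤ convDim S) : (interior S).Nonempty := by
  refine hS.interior_nonempty_iff_affineSpan_eq_top.mpr
    ((AffineSubspace.direction_eq_top_iff_of_nonempty (hne.mono (subset_affineSpan ℝ S))).mp ?_)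
  refine Submodule.eq_top_of_finrank_eq (le_antisymm (Submodule.finrank_le _) ?_)
  simpa [convDim] using hdim

end ConvexGeometry

section Farkas

variable {ι E : Type*} [Fintype ι]

theorem exists_nonneg_sub_smul_support_ssubset {c u : ι → ℝ} (hc : 0 ≤ c)
    (hu : ∃ i, 0 < u i) (hsupp : Function.support u ⊆ Function.support c) :
    ∃ t : ℝ, 0 ≤ c - t • u ∧ Function.support (c - t • u) ⊂ Function.support c := by
  classical
  obtain ⟨i, hi⟩ := hu
  -- ratio test: `t = c i₀ / u i₀` is the largest step keeping `c - t • u` nonnegative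
  obtain ⟨i₀, hi₀, hmin⟩ := (Finset.univ.filter (0 < u ·)).exists_min_image (fun i => c i / u i)
    ⟨i, by simpa using hi⟩
  have hu₀ : 0 < u i₀ := by simpa using hi₀
  have ht : 0 ≤ c i₀ / u i₀ := div_nonneg (hc i₀) hu₀.le
  refine ⟨c i₀ / u i₀, fun j => ?_, ?_⟩
  · simp only [Pi.zero_apply, Pi.sub_apply, Pi.smul_apply, smul_eq_mul, sub_nonneg]
    rcases le_or_gt (u j) 0 with hj | hj
    · exact (mul_nonpos_of_nonneg_of_nonpos ht hj).trans (hc j)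
    · exact (le_div_iff₀ hj).mp (hmin j (by simpa using hj))
  · have hsub : Function.support (c - (c i₀ / u i₀) • u) ⊆ Function.support c := by
      intro j hj hcj
      have : u j = 0 := by_contra fun h => hsupp h hcj
      simp_all
    refine (ssubset_iff_of_subset hsub).mpr ⟨i₀, hsupp hu₀.ne', ?_⟩
    simp [hu₀.ne']

theorem exists_sum_smul_eq_zero_of_not_linearIndepOn [AddCommGroup E] [Module ℝ E] {v : ι → E}
    {s : Set ι} (h : ¬ LinearIndepOn ℝ v s) :
    ∃ u : ι → ℝ, ∑ i, u i • v i = 0 ∧ Function.support u ⊆ s ∧ ∃ i, 0 < u i := by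
  classical
  obtain ⟨t, g, hts, hg, i, hit, hgi⟩ : ∃ (t : Finset ι) (g : ι → ℝ), (t : Set ι) ⊆ s ∧
      ∑ i ∈ t, g i • v i = 0 ∧ ∃ i ∈ t, g i ≠ 0 := by
    simpa [linearIndepOn_iff'] using h
  set u : ι → ℝ := fun i => if i ∈ t then g i else 0
  have hu : ∑ i, u i • v i = 0 := by simpa [u, ite_smul, Finset.sum_ite_mem] using hg
  have hsupp : Function.support u ⊆ s := fun j hj =>
    hts <| Finset.mem_coe.mpr (by by_contra h; simp [u, h] at hj)
  rcases (show u i ≠ 0 by simpa [u, hit]).lt_or_gt with hneg | hpos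
  · exact ⟨-u, by simp [neg_smul, hu], by simpa using hsupp, i, by simpa using hneg⟩
  · exact ⟨u, hu, hsupp, i, hpos⟩

theorem exists_nonneg_linearIndepOn_support [AddCommGroup E] [Module ℝ E] (v : ι → E)
    {c : ι → ℝ} (hc : 0 ≤ c) :
    ∃ c' : ι → ℝ, 0 ≤ c' ∧ LinearIndepOn ℝ v (Function.support c') ∧
      ∑ i, c' i • v i = ∑ i, c i • v i := by
  induction h : (Function.support c).ncard using Nat.strong_induction_on generalizing c with
  | _ n ih =>
  by_cases hli : LinearIndepOn ℝ v (Function.support c)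
  · exact ⟨c, hc, hli, rfl⟩
  obtain ⟨u, hu, hsupp, hpos⟩ := exists_sum_smul_eq_zero_of_not_linearIndepOn hli
  obtain ⟨t, hct, hlt⟩ := exists_nonneg_sub_smul_support_ssubset hc hpos hsupp
  obtain ⟨c', hc', hli', hsum⟩ := ih _ (h ▸ Set.ncard_lt_ncard hlt) hct rfl
  refine ⟨c', hc', hli', hsum.trans ?_⟩
  simp [sub_smul, mul_smul, Finset.sum_sub_distrib, ← Finset.smul_sum, hu]

theorem LinearIndependent.isClosed_image_Ici [NormedAddCommGroup E] [NormedSpace ℝ E]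
    {v : ι → E} (hv : LinearIndependent ℝ v) :
    IsClosed (Fintype.linearCombination ℝ v '' Ici 0) :=
  (LinearMap.isClosedEmbedding_of_injective (LinearMap.ker_eq_bot.mpr
    (linearIndependent_iff_injective_fintypeLinearCombination.mp hv))).isClosedMap _ isClosed_Ici

theorem isClosed_image_Ici_fintypeLinearCombination [NormedAddCommGroup E] [NormedSpace ℝ E]
    [FiniteDimensional ℝ E] (v : ι → E) :
    IsClosed (Fintype.linearCombination ℝ v '' Ici 0) := by
  classical
  have hunion : Fintype.linearCombination ℝ v '' Ici 0 =
      ⋃ s : {s : Set ι // LinearIndepOn ℝ v s},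
        Fintype.linearCombination ℝ (fun i : s.1 => v i) '' Ici 0 := by
    ext x
    simp only [mem_image, mem_Ici, mem_iUnion, Fintype.linearCombination_apply]
    constructor
    · rintro ⟨c, hc, rfl⟩
      obtain ⟨c', hc', hli, hsum⟩ := exists_nonneg_linearIndepOn_support v hc
      refine ⟨⟨_, hli⟩, fun i => c' i, fun i => hc' i, ?_⟩
      rw [← hsum]
      exact (Finset.sum_congr_set _ _ _ (fun _ _ => rfl)
        (fun i hi => by simp [Function.notMem_support.mp hi])).symm
    · rintro ⟨s, c, hc, rfl⟩
      refine ⟨fun i => if h : i ∈ s.1 then c ⟨i, h⟩ else 0, fun i => ?_, ?_⟩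
      · by_cases h : i ∈ s.1
        · simpa [h] using hc ⟨i, h⟩
        · simp [h]
      · exact Finset.sum_congr_set _ _ _ (fun i hi => by simp [hi]) (fun i hi => by simp [hi])
  rw [hunion]
  exact isClosed_iUnion_of_finite fun s => LinearIndependent.isClosed_image_Ici s.2

theorem exists_nonneg_sum_smul_eq_of_forall_dual [NormedAddCommGroup E] [NormedSpace ℝ E]
    [FiniteDimensional ℝ E] (v : ι → E) (w : E)
    (h : ∀ f : StrongDual ℝ E, (∀ i, 0 ≤ f (v i)) → 0 ≤ f w) :
    ∃ c : ι → ℝ, 0 ≤ c ∧ ∑ i, c i • v i = w := by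
  classical
  let C : ProperCone ℝ E :=
    { toSubmodule := (PointedCone.positive ℝ (ι → ℝ)).map (Fintype.linearCombination ℝ v)
      isClosed' := isClosed_image_Ici_fintypeLinearCombination v }
  have hmem : ∀ x, x ∈ C ↔ ∃ c : ι → ℝ, 0 ≤ c ∧ ∑ i, c i • v i = x := fun x => by
    simp only [← Fintype.linearCombination_apply]
    exact Iff.rfl
  by_contra hw
  obtain ⟨f, hfC, hfw⟩ := C.hyperplane_separation_point (x₀ := w) (mt (hmem w).mp hw)
  refine hfw.not_ge (h f fun i => hfC _ ((hmem _).mpr ⟨Pi.single i 1, ?_, ?_⟩))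
  · exact Pi.single_nonneg.mpr zero_le_one
  · simp [Pi.single_apply]

theorem exists_nonneg_of_forall_inner_le [NormedAddCommGroup E] [InnerProductSpace ℝ E]
    [FiniteDimensional ℝ E] (u : ι → E) (β : ι → ℝ) (w : E) (γ : ℝ)
    (hfeas : ∃ x, ∀ i, ⟪u i, x⟫ ≤ β i) (h : ∀ x, (∀ i, ⟪u i, x⟫ ≤ β i) → ⟪w, x⟫ ≤ γ) :
    ∃ c : ι → ℝ, 0 ≤ c ∧ ∑ i, c i • u i = w ∧ ∑ i, c i * β i ≤ γ := by
  -- Homogenize: `(w, γ)` lies in the cone generated by the `(u i, β i)` and `(0, 1)`.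
  let v : Option ι → E × ℝ := fun o => o.elim (0, 1) fun i => (u i, β i)
  have hdual : ∀ f : StrongDual ℝ (E × ℝ), (∀ o, 0 ≤ f (v o)) → 0 ≤ f (w, γ) := by
    intro f hf
    set y := (InnerProductSpace.toDual ℝ E).symm (f.comp (ContinuousLinearMap.inl ℝ E ℝ))
    have hf_apply : ∀ x t, f (x, t) = ⟪y, x⟫ + t * f (0, 1) := by
      intro x t
      have : ((x, t) : E × ℝ) = (x, 0) + t • ((0 : E), (1 : ℝ)) := by simp
      rw [this, map_add, map_smul, InnerProductSpace.toDual_symm_apply, smul_eq_mul]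
      rfl
    rw [hf_apply]
    exact inner_add_mul_nonneg_of_forall_inner_le u β w γ hfeas h (hf none)
      fun i => hf_apply (u i) (β i) ▸ hf (some i)
  obtain ⟨c, hc, hsum⟩ := exists_nonneg_sum_smul_eq_of_forall_dual v (w, γ) hdual
  simp only [Fintype.sum_option, Prod.ext_iff, Prod.fst_add, Prod.snd_add, Prod.fst_sum,
    Prod.snd_sum, v, Option.elim, Prod.smul_fst, Prod.smul_snd, smul_zero, zero_add,
    smul_eq_mul, mul_one] at hsum
  refine ⟨fun i => c (some i), fun i => hc _, hsum.1, ?_⟩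
  linarith [hsum.2, show 0 ≤ c none from hc none]

end Farkas

section Polyhedron

variable {d N : ℕ} {a : Fin N → EuclideanSpace ℝ (Fin d)} {b : Fin N → ℝ}

theorem convex_Qset_s15 : Convex ℝ (Qset a b) := by
  simp only [Qset, Set.ofPred_forall]
  exact convex_iInter fun i => convex_halfSpace_le (innerₗ _ (a i)).isLinear _

theorem convex_Qfacet (k : Fin N) : Convex ℝ (Qfacet a b k) :=
  convex_Qset_s15.inter (convex_hyperplane (innerₗ _ (a k)).isLinear _)

theorem convex_Qstar (c : EuclideanSpace ℝ (Fin d)) : Convex ℝ (Qstar a c) :=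
  (convex_Ici 0).inter ((convex_singleton c).linear_preimage (Fintype.linearCombination ℝ a))

theorem isClosed_Qstar (c : EuclideanSpace ℝ (Fin d)) : IsClosed (Qstar a c) :=
  isClosed_Ici.inter (isClosed_eq (by fun_prop) continuous_const)

theorem inner_eq_sum_of_mem_Qstar {c x : EuclideanSpace ℝ (Fin d)} {p : Fin N → ℝ}
    (hp : p ∈ Qstar a c) : ⟪c, x⟫ = ∑ i, p i * ⟪a i, x⟫ := by
  rw [← hp.2, sum_inner]
  simp only [real_inner_smul_left]

theorem inner_le_sum_of_mem_Qstar {c x : EuclideanSpace ℝ (Fin d)} {p : Fin N → ℝ}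
    (hx : x ∈ Qset a b) (hp : p ∈ Qstar a c) : ⟪c, x⟫ ≤ ∑ i, b i * p i := by
  rw [inner_eq_sum_of_mem_Qstar hp]
  exact Finset.sum_le_sum fun i _ => by
    rw [mul_comm (b i)]
    exact mul_le_mul_of_nonneg_left (hx i) (hp.1 i)

theorem le_sum_of_mem_Qfacet {k : Fin N} {x : EuclideanSpace ℝ (Fin d)} {p : Fin N → ℝ}
    (hx : x ∈ Qfacet a b k) (hp : p ∈ Qstar a (a k)) : b k ≤ ∑ i, b i * p i :=
  hx.2 ▸ inner_le_sum_of_mem_Qstar hx.1 hp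

theorem isBounded_Qstar_sep_le {z : EuclideanSpace ℝ (Fin d)} (hz : ∀ i, ⟪a i, z⟫ < b i)
    (c : EuclideanSpace ℝ (Fin d)) (β : ℝ) :
    Bornology.IsBounded {p ∈ Qstar a c | ∑ i, b i * p i ≤ β} := by
  refine Bornology.forall_isBounded_image_eval_iff.mp fun i =>
    (Metric.isBounded_Icc 0 ((β - ⟪c, z⟫) / (b i - ⟪a i, z⟫))).subset ?_
  rintro _ ⟨p, ⟨hp, hpβ⟩, rfl⟩
  have hslack : ∀ j, 0 ≤ p j * (b j - ⟪a j, z⟫) := fun j =>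
    mul_nonneg (hp.1 j) (sub_pos.mpr (hz j)).le
  have htotal : ∑ j, p j * (b j - ⟪a j, z⟫) = ∑ j, b j * p j - ⟪c, z⟫ := by
    rw [inner_eq_sum_of_mem_Qstar hp, ← Finset.sum_sub_distrib]
    exact Finset.sum_congr rfl fun j _ => by ring
  refine ⟨hp.1 i, (le_div_iff₀ (sub_pos.mpr (hz i))).mpr ?_⟩
  calc p i * (b i - ⟪a i, z⟫) ≤ ∑ j, p j * (b j - ⟪a j, z⟫) :=
        Finset.single_le_sum (fun j _ => hslack j) (Finset.mem_univ i)
    _ ≤ β - ⟪c, z⟫ := by linarith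

theorem inner_lt_of_mem_interior_Qset {i : Fin N} (ha : a i ≠ 0) {z : EuclideanSpace ℝ (Fin d)}
    (hz : z ∈ interior (Qset a b)) : ⟪a i, z⟫ < b i := by
  have hcont : Continuous fun t : ℝ => z + t • a i := by fun_prop
  have hlim : Tendsto (fun t : ℝ => z + t • a i) (𝓝[>] 0) (𝓝 z) :=
    (hcont.tendsto' 0 z (by simp)).mono_left nhdsWithin_le_nhds
  obtain ⟨t, hmem, ht⟩ :=
    ((hlim.eventually (mem_interior_iff_mem_nhds.mp hz)).and self_mem_nhdsWithin).exists
  have := hmem i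
  rw [inner_add_right, real_inner_smul_right, real_inner_self_eq_norm_sq] at this
  have : 0 < t * ‖a i‖ ^ 2 := mul_pos ht (by positivity)
  linarith

theorem sub_one_le_convDim_Qfacet {k : Fin N} (hak : a k ≠ 0) {x : EuclideanSpace ℝ (Fin d)}
    (hx : x ∈ Qfacet a b k) (hlt : ∀ j ≠ k, ⟪a j, x⟫ < b j) :
    d - 1 ≤ convDim (Qfacet a b k) := by
  have hperp : (ℝ ∙ a k)ᗮ ≤ (affineSpan ℝ (Qfacet a b k)).direction := by
    intro w hw
    have hkw : ⟪a k, w⟫ = 0 := Submodule.mem_orthogonal_singleton_iff_inner_right.mp hw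
    have hev : ∀ᶠ t in 𝓝 (0 : ℝ), ∀ j, j ≠ k → ⟪a j, x + t • w⟫ < b j := by
      refine eventually_all.mpr fun j => ?_
      by_cases hj : j = k
      · exact Eventually.of_forall fun _ h => absurd hj h
      have hcont : Continuous fun t : ℝ => ⟪a j, x + t • w⟫ := by fun_prop
      exact ((hcont.tendsto' 0 _ (by simp)).eventually_lt_const (hlt j hj)).mono fun _ h _ => h
    obtain ⟨t, hts, ht⟩ := ((hev.filter_mono nhdsWithin_le_nhds).and
      (self_mem_nhdsWithin : {0}ᶜ ∈ 𝓝[≠] (0 : ℝ))).exists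
    have hk : ⟪a k, x + t • w⟫ = b k := by
      rw [inner_add_right, real_inner_smul_right, hkw, mul_zero, add_zero, hx.2]
    have hmem : x + t • w ∈ Qfacet a b k := by
      refine ⟨fun j => ?_, hk⟩
      by_cases hj : j = k
      · exact hj ▸ hk.le
      · exact (hts j hj).le
    have hdir := AffineSubspace.vsub_mem_direction (subset_affineSpan ℝ _ hmem)
      (subset_affineSpan ℝ _ hx)
    rw [vsub_eq_sub, add_sub_cancel_left] at hdir
    simpa [smul_smul, inv_mul_cancel₀ ht] using Submodule.smul_mem _ t⁻¹ hdir
  have hsum := Submodule.finrank_add_finrank_orthogonal (ℝ ∙ a k)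
  rw [finrank_span_singleton hak, finrank_euclideanSpace_fin] at hsum
  have := Submodule.finrank_mono hperp
  unfold convDim
  omega

theorem exists_smul_sub_mem_Qstar_of_forall_inner_eq {k j : Fin N}
    {x₀ : EuclideanSpace ℝ (Fin d)} (hx₀ : x₀ ∈ Qfacet a b k)
    (heq : ∀ x ∈ Qfacet a b k, ⟪a j, x⟫ = b j) :
    ∃ μ : ℝ, 0 ≤ μ ∧ ∃ lam ∈ Qstar a (μ • a k - a j), ∑ i, b i * lam i ≤ μ * b k - b j := by
  let u : Option (Fin N) → EuclideanSpace ℝ (Fin d) := fun o => o.elim (-a k) a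
  let β : Option (Fin N) → ℝ := fun o => o.elim (-b k) b
  have hfacet : ∀ x, (∀ o, ⟪u o, x⟫ ≤ β o) ↔ x ∈ Qfacet a b k := fun x => by
    simp only [Option.forall, u, β, Option.elim, inner_neg_left, neg_le_neg_iff]
    exact ⟨fun h => ⟨h.2, le_antisymm (h.2 k) h.1⟩, fun h => ⟨h.2.ge, h.1⟩⟩
  obtain ⟨c, hc, hcu, hcβ⟩ := exists_nonneg_of_forall_inner_le u β (-a j) (-b j)
    ⟨x₀, (hfacet x₀).mpr hx₀⟩ fun x hx => by rw [inner_neg_left, heq x ((hfacet x).mp hx)]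
  simp only [Fintype.sum_option, u, β, Option.elim, smul_neg, mul_neg] at hcu hcβ
  refine ⟨c none, hc none, fun i => c (some i),
    ⟨fun i => hc (some i), (neg_add_eq_iff_eq_add.mp hcu).trans (sub_eq_add_neg _ _).symm⟩, ?_⟩
  have : ∑ i, b i * c (some i) = ∑ i, c (some i) * b i :=
    Finset.sum_congr rfl fun i _ => mul_comm _ _
  linarith

theorem exists_mem_Qstar_pos_of_forall_inner_eq {k j : Fin N} {x₀ z : EuclideanSpace ℝ (Fin d)}
    (hx₀ : x₀ ∈ Qfacet a b k) (hz : ∀ i, ⟪a i, z⟫ < b i)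
    (heq : ∀ x ∈ Qfacet a b k, ⟪a j, x⟫ = b j) :
    ∃ p ∈ Qstar a (a k), ∑ i, b i * p i ≤ b k ∧ 0 < p j := by
  obtain ⟨μ, hμ, lam, hlam, hbμ⟩ := exists_smul_sub_mem_Qstar_of_forall_inner_eq hx₀ heq
  rcases hμ.eq_or_lt with rfl | hμ
  · -- `lam` would certify `⟪a j, x⟫ ≥ b j` on all of `Q_{A,b}`, which `z` violates
    have := inner_le_sum_of_mem_Qstar (fun i => (hz i).le) hlam
    rw [zero_smul, zero_sub, inner_neg_left] at this
    linarith [hz j]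
  have hsingle : (0 : Fin N → ℝ) ≤ Pi.single j 1 := Pi.single_nonneg.mpr zero_le_one
  refine ⟨μ⁻¹ • (lam + Pi.single j 1), ⟨fun i => ?_, ?_⟩, ?_, ?_⟩
  · exact mul_nonneg (inv_nonneg.mpr hμ.le) (add_nonneg (hlam.1 i) (hsingle i))
  · simp only [Pi.smul_apply, Pi.add_apply, Pi.single_apply, smul_eq_mul, mul_smul, add_smul,
      ite_smul, one_smul, zero_smul, smul_add, smul_ite, smul_zero, Finset.sum_add_distrib,
      ← Finset.smul_sum, hlam.2, Finset.sum_ite_eq', Finset.mem_univ, if_true]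
    rw [← smul_add, sub_add_cancel, smul_smul, inv_mul_cancel₀ hμ.ne', one_smul]
  · simp only [Pi.smul_apply, Pi.add_apply, Pi.single_apply, smul_eq_mul, mul_add, mul_ite,
      mul_one, mul_zero, mul_left_comm (b _), Finset.sum_add_distrib, ← Finset.mul_sum,
      Finset.sum_ite_eq', Finset.mem_univ, if_true]
    rw [mul_comm (b j), ← mul_add, inv_mul_le_iff₀ hμ]
    linarith
  · simp only [Pi.smul_apply, Pi.add_apply, Pi.single_eq_same, smul_eq_mul]
    exact mul_pos (inv_pos.mpr hμ) (by linarith [hlam.1 j])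

theorem exists_mem_Qstar_ne_single {k : Fin N} (hF : (Qfacet a b k).Nonempty)
    {z : EuclideanSpace ℝ (Fin d)} (hz : ∀ i, ⟪a i, z⟫ < b i) (hak : a k ≠ 0)
    (hdim : convDim (Qfacet a b k) < d - 1) :
    ∃ p ∈ Qstar a (a k), ∑ i, b i * p i = b k ∧ p ≠ Pi.single k 1 := by
  obtain ⟨x₀, hx₀⟩ := hF
  by_contra! honly
  have hslack : ∀ j : {j // j ≠ k}, ∃ x ∈ Qfacet a b k, ⟪a j, x⟫ < b j := by
    rintro ⟨j, hj⟩
    by_contra! hge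
    obtain ⟨p, hp, hpb, hpj⟩ := exists_mem_Qstar_pos_of_forall_inner_eq hx₀ hz
      fun x hx => le_antisymm (hx.1 j) (hge x hx)
    rw [honly p hp (le_antisymm hpb (le_sum_of_mem_Qfacet hx₀ hp)), Pi.single_eq_of_ne hj] at hpj
    exact hpj.false
  obtain ⟨x, hx, hlt⟩ := (convex_Qfacet k).exists_forall_inner_lt ⟨x₀, hx₀⟩
    (fun j : {j // j ≠ k} => a j) (fun j => b j) (fun x hx j => hx.1 j) hslack
  exact hdim.not_ge (sub_one_le_convDim_Qfacet hak hx fun j hj => hlt ⟨j, hj⟩)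

end Polyhedron

theorem stmt_15_general (d N : ℕ)
    (a : Fin N → EuclideanSpace ℝ (Fin d))
    (ha_norm : ∀ i, ‖a i‖ = 1)
    (b : Fin N → ℝ) (hb : b ∈ CA a) (k : Fin N)
    (hdim : (convDim (Qfacet a b k) : ℤ) ≤ (d : ℤ) - 2) :
    convDim (Qset a b) ≤ d - 1 ∨
      ∃ p ∈ (Qstar a (a k)).extremePoints ℝ,
        p ≠ Pi.single k 1 ∧ ∑ i, b i * p i = b k := by
  rcases le_or_gt (convDim (Qset a b)) (d - 1) with hQ | hQ
  · exact Or.inl hQ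
  right
  have ha : ∀ i, a i ≠ 0 := fun i => norm_ne_zero_iff.mp (by simp [ha_norm])
  obtain ⟨x₀, hx₀Q, hx₀k⟩ := hb k
  have hx₀ : x₀ ∈ Qfacet a b k := ⟨hx₀Q, hx₀k⟩
  obtain ⟨z, hz⟩ := convex_Qset_s15.interior_nonempty_of_le_convDim ⟨x₀, hx₀Q⟩ (by omega)
  have hzlt : ∀ i, ⟪a i, z⟫ < b i := fun i => inner_lt_of_mem_interior_Qset (ha i) hz
  set G := {p ∈ Qstar a (a k) | ∑ i, b i * p i = b k}
  have hface : IsExtreme ℝ (Qstar a (a k)) G :=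
    ((dotProductBilin ℝ ℝ b).concaveOn (convex_Qstar _)).isExtreme_sep_eq
      fun p hp => le_sum_of_mem_Qfacet hx₀ hp
  have hcompact : IsCompact G := Metric.isCompact_of_isClosed_isBounded
    ((isClosed_Qstar _).inter (isClosed_eq (by fun_prop) continuous_const))
    ((isBounded_Qstar_sep_le hzlt _ (b k)).subset fun p hp => ⟨hp.1, hp.2.le⟩)
  have hconvex : Convex ℝ G :=
    (convex_Qstar _).inter (convex_hyperplane (dotProductBilin ℝ ℝ b).isLinear _)
  obtain ⟨p, hp, hpb, hpk⟩ := exists_mem_Qstar_ne_single ⟨x₀, hx₀⟩ hzlt (ha k) (by omega)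
  obtain ⟨q, hq, hqk⟩ := hcompact.exists_mem_extremePoints_ne hconvex ⟨hp, hpb⟩ hpk
  exact ⟨q, hface.extremePoints_subset_extremePoints hq, hqk, hq.1.2⟩

theorem stmt_15 (d N : ℕ) (hd : 1 ≤ d) (hN : 1 ≤ N)
    (a : Fin N → EuclideanSpace ℝ (Fin d))
    (ha_inj : Function.Injective a) (ha_norm : ∀ i, ‖a i‖ = 1)
    (b : Fin N → ℝ) (hb : b ∈ CA a) (k : Fin N)
    (hdim : (convDim (Qfacet a b k) : ℤ) ≤ (d : ℤ) - 2) :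
    convDim (Qset a b) ≤ d - 1 ∨
      ∃ p ∈ (Qstar a (a k)).extremePoints ℝ,
        p ≠ Pi.single k 1 ∧ ∑ i, b i * p i = b k :=
  stmt_15_general d N a ha_norm b hb k hdim
end
end

section
/- Assume Q_{A,0} = {0} (so that every Q_{A,b} is bounded), and assume δ_A ∈ (0,1), where δ_A := sup_{c ∈ S^{d−1}} min_{1 ≤ k ≤ N} ‖c − a_k‖₂. For a nonempty convex compact set C ⊆ ℝ^d, let P(C) := Q_{A,b(C)} with b(C)_i := σ_C(a_i). Then for every nonempty convex compact C ⊆ ℝ^d one has C ⊆ P(C) and dist_H(P(C), C) ≤ ((2 − δ_A)/(1 − δ_A)) · δ_A · ‖C‖₂. -/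
/-!
Every unit vector `u` lies within `δ = δ_A` of some `a k`, so on `P(C)` the linear form `⟪u, ·⟫`
exceeds `σ_C(a k)` by at most `δ ‖x‖`. Taking `u = x / ‖x‖` gives `‖x‖ ≤ ‖C‖ / (1 - δ)` on `P(C)`.
Taking for `u` the direction from the metric projection `y` of `x` onto `C` towards `x`, the form
`⟪u, ·⟫` is maximised on `C` at `y`, so `σ_C(a k) ≤ ⟪u, y⟫ + δ ‖C‖`, whence `‖x - y‖ ≤ δ (‖C‖ + ‖x‖)`.
-/

open scoped RealInnerProductSpace

noncomputable section

/-- The support function `σ_C(v) = sup_{x ∈ C} vᵀx`. -/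
def suppFn {d : ℕ} (C : Set (EuclideanSpace ℝ (Fin d))) (v : EuclideanSpace ℝ (Fin d)) : ℝ :=
  sSup ((fun x => ⟪v, x⟫) '' C)

/-- The size `‖C‖₂ = sup_{x ∈ C} ‖x‖₂`. -/
def setNorm {d : ℕ} (C : Set (EuclideanSpace ℝ (Fin d))) : ℝ :=
  sSup ((fun x => ‖x‖) '' C)

/-- The metric density `δ_A = sup_{c ∈ S^{d-1}} min_k ‖c - a_k‖₂`. -/
def deltaA {d N : ℕ} (a : Fin N → EuclideanSpace ℝ (Fin d)) : ℝ :=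
  sSup {r | ∃ c : EuclideanSpace ℝ (Fin d), ‖c‖ = 1 ∧ r = sInf {s | ∃ k, s = ‖c - a k‖}}

/-- The projection `P_{G_A}(C) = Q_{A,b(C)}` with `b(C)_i = σ_C(a_i)`. -/
def PGA {d N : ℕ} (a : Fin N → EuclideanSpace ℝ (Fin d)) (C : Set (EuclideanSpace ℝ (Fin d))) :
    Set (EuclideanSpace ℝ (Fin d)) :=
  Qset a (fun i => suppFn C (a i))

section InnerProductSpace

variable {F : Type*} [NormedAddCommGroup F] [InnerProductSpace ℝ F]

theorem real_inner_inv_norm_smul_self (x : F) : ⟪‖x‖⁻¹ • x, x⟫ = ‖x‖ := by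
  rw [real_inner_smul_left, real_inner_self_eq_norm_mul_norm]
  rcases eq_or_ne ‖x‖ 0 with hx | hx
  · simp [hx]
  · field_simp

theorem exists_mem_isMaxOn_inner_sub {C : Set F} (hne : C.Nonempty) (hconv : Convex ℝ C)
    (hcomplete : IsComplete C) (x : F) : ∃ y ∈ C, IsMaxOn (fun z => ⟪x - y, z⟫) C y := by
  obtain ⟨y, hy, hmin⟩ := exists_norm_eq_iInf_of_complete_convex hne hcomplete hconv x
  refine ⟨y, hy, fun z hz => ?_⟩
  have := (norm_eq_iInf_iff_real_inner_le_zero hconv hy).1 hmin z hz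
  rw [inner_sub_right] at this
  exact sub_nonpos.1 this

end InnerProductSpace

variable {d N : ℕ} {C : Set (EuclideanSpace ℝ (Fin d))}

theorem setNorm_nonneg (C : Set (EuclideanSpace ℝ (Fin d))) : 0 ≤ setNorm C :=
  Real.sSup_nonneg <| by rintro _ ⟨x, -, rfl⟩; exact norm_nonneg x

theorem norm_le_setNorm (hC : IsCompact C) {x : EuclideanSpace ℝ (Fin d)} (hx : x ∈ C) :
    ‖x‖ ≤ setNorm C :=
  le_csSup (hC.image continuous_norm).bddAbove ⟨x, hx, rfl⟩

theorem inner_le_suppFn (hC : IsCompact C) (v : EuclideanSpace ℝ (Fin d))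
    {x : EuclideanSpace ℝ (Fin d)} (hx : x ∈ C) : ⟪v, x⟫ ≤ suppFn C v :=
  le_csSup (hC.image (continuous_const.inner continuous_id)).bddAbove ⟨x, hx, rfl⟩

theorem suppFn_le_inner_add_of_isMaxOn (hC : IsCompact C) {u y : EuclideanSpace ℝ (Fin d)}
    (hy : y ∈ C) (hmax : IsMaxOn (fun z => ⟪u, z⟫) C y) (w : EuclideanSpace ℝ (Fin d)) :
    suppFn C w ≤ ⟪u, y⟫ + ‖w - u‖ * setNorm C := by
  refine csSup_le ⟨_, y, hy, rfl⟩ ?_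
  rintro _ ⟨z, hz, rfl⟩
  have hwu : ⟪w - u, z⟫ ≤ ‖w - u‖ * setNorm C :=
    (real_inner_le_norm _ _).trans
      (mul_le_mul_of_nonneg_left (norm_le_setNorm hC hz) (norm_nonneg _))
  have huz : ⟪u, z⟫ ≤ ⟪u, y⟫ := hmax hz
  rw [inner_sub_left] at hwu
  dsimp only
  linarith

section Directions

variable (a : Fin N → EuclideanSpace ℝ (Fin d))

theorem subset_PGA (hC : IsCompact C) : C ⊆ PGA a C :=
  fun _ hx i => inner_le_suppFn hC (a i) hx

theorem inner_le_suppFn_add_of_mem_PGA {x : EuclideanSpace ℝ (Fin d)} (hx : x ∈ PGA a C)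
    (u : EuclideanSpace ℝ (Fin d)) (k : Fin N) :
    ⟪u, x⟫ ≤ suppFn C (a k) + ‖u - a k‖ * ‖x‖ := by
  have hux : ⟪u - a k, x⟫ ≤ ‖u - a k‖ * ‖x‖ := real_inner_le_norm _ _
  rw [inner_sub_left] at hux
  linarith [hx k]

theorem deltaA_nonneg : 0 ≤ deltaA a :=
  Real.sSup_nonneg <| by
    rintro _ ⟨c, -, rfl⟩
    exact Real.sInf_nonneg <| by rintro _ ⟨k, rfl⟩; exact norm_nonneg _

theorem exists_norm_sub_le_deltaA [Nonempty (Fin N)] {u : EuclideanSpace ℝ (Fin d)}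
    (hu : ‖u‖ = 1) : ∃ k, ‖u - a k‖ ≤ deltaA a := by
  have hfin : {s | ∃ k, s = ‖u - a k‖}.Finite :=
    (Set.finite_range fun k => ‖u - a k‖).subset <| by rintro _ ⟨k, rfl⟩; exact ⟨k, rfl⟩
  obtain ⟨k, hk⟩ := Set.Nonempty.csInf_mem (s := {s | ∃ k, s = ‖u - a k‖})
    ⟨_, Classical.arbitrary (Fin N), rfl⟩ hfin
  refine ⟨k, hk ▸ le_csSup ⟨1 + ‖a (Classical.arbitrary _)‖, ?_⟩ ⟨u, hu, rfl⟩⟩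
  rintro _ ⟨c, hc, rfl⟩
  calc sInf {s | ∃ j, s = ‖c - a j‖} ≤ ‖c - a (Classical.arbitrary _)‖ :=
        csInf_le ⟨0, by rintro _ ⟨j, rfl⟩; exact norm_nonneg _⟩ ⟨_, rfl⟩
    _ ≤ 1 + ‖a (Classical.arbitrary _)‖ := hc ▸ norm_sub_le _ _

variable [Nonempty (Fin N)]

theorem norm_le_setNorm_div_of_mem_PGA (ha : ∀ i, ‖a i‖ ≤ 1) (hδ : deltaA a < 1)
    (hne : C.Nonempty) (hC : IsCompact C) {x : EuclideanSpace ℝ (Fin d)} (hx : x ∈ PGA a C) :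
    ‖x‖ ≤ setNorm C / (1 - deltaA a) := by
  rw [le_div_iff₀ (sub_pos.2 hδ)]
  rcases eq_or_ne x 0 with rfl | hx0
  · simpa using setNorm_nonneg C
  obtain ⟨k, hk⟩ := exists_norm_sub_le_deltaA a (by simpa using norm_smul_inv_norm (𝕜 := ℝ) hx0)
  have hux := inner_le_suppFn_add_of_mem_PGA a hx (‖x‖⁻¹ • x) k
  rw [real_inner_inv_norm_smul_self] at hux
  obtain ⟨y, hy⟩ := hne
  have hσ := suppFn_le_inner_add_of_isMaxOn hC (u := 0) hy
    (isMaxOn_iff.2 fun _ _ => by simp) (a k)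
  rw [inner_zero_left, sub_zero] at hσ
  nlinarith [mul_le_mul_of_nonneg_right hk (norm_nonneg x),
    mul_le_of_le_one_left (setNorm_nonneg C) (ha k)]

theorem exists_dist_le_of_mem_PGA (hne : C.Nonempty) (hconv : Convex ℝ C) (hC : IsCompact C)
    {x : EuclideanSpace ℝ (Fin d)} (hx : x ∈ PGA a C) :
    ∃ y ∈ C, dist x y ≤ deltaA a * (setNorm C + ‖x‖) := by
  obtain ⟨y, hy, hmax⟩ := exists_mem_isMaxOn_inner_sub hne hconv hC.isComplete x
  refine ⟨y, hy, ?_⟩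
  have hδ := deltaA_nonneg a
  have hM := setNorm_nonneg C
  rcases eq_or_ne x y with rfl | hxy
  · simpa using by positivity
  set u := ‖x - y‖⁻¹ • (x - y) with hu
  have humax : IsMaxOn (fun z => ⟪u, z⟫) C y := isMaxOn_iff.2 fun z hz => by
    simp only [hu, real_inner_smul_left]
    exact mul_le_mul_of_nonneg_left (isMaxOn_iff.1 hmax z hz) (by positivity)
  obtain ⟨k, hk⟩ := exists_norm_sub_le_deltaA a 
    (by simpa using norm_smul_inv_norm (𝕜 := ℝ) (sub_ne_zero.2 hxy))
  have hux := inner_le_suppFn_add_of_mem_PGA a hx u k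
  have hσ := suppFn_le_inner_add_of_isMaxOn hC hy humax (a k)
  have hxy_eq : ⟪u, x⟫ = ‖x - y‖ + ⟪u, y⟫ := by
    have := real_inner_inv_norm_smul_self (x - y)
    rw [inner_sub_right] at this
    linarith
  rw [norm_sub_rev] at hσ
  rw [dist_eq_norm]
  nlinarith [mul_le_mul_of_nonneg_right hk (norm_nonneg x), mul_le_mul_of_nonneg_right hk hM]

end Directions

theorem stmt_17_general (d N : ℕ) (hN : 1 ≤ N)
    (a : Fin N → EuclideanSpace ℝ (Fin d))
    (ha_norm : ∀ i, ‖a i‖ = 1)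
    (hδ1 : deltaA a < 1)
    (C : Set (EuclideanSpace ℝ (Fin d)))
    (hCne : C.Nonempty) (hCconv : Convex ℝ C) (hCcomp : IsCompact C) :
    C ⊆ PGA a C ∧
      Metric.hausdorffDist (PGA a C) C ≤
        (2 - deltaA a) / (1 - deltaA a) * deltaA a * setNorm C := by
  have : Nonempty (Fin N) := ⟨⟨0, hN⟩⟩
  have hδ := deltaA_nonneg a
  have hM := setNorm_nonneg C
  have h1δ : 0 < 1 - deltaA a := sub_pos.2 hδ1
  have hr : 0 ≤ (2 - deltaA a) / (1 - deltaA a) * deltaA a * setNorm C := by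
    have : 0 ≤ 2 - deltaA a := by linarith
    positivity
  refine ⟨subset_PGA a hCcomp, Metric.hausdorffDist_le_of_mem_dist hr (fun x hx => ?_)
    fun y hy => ⟨y, subset_PGA a hCcomp hy, by simpa using hr⟩⟩
  obtain ⟨y, hy, hxy⟩ := exists_dist_le_of_mem_PGA a hCne hCconv hCcomp hx
  refine ⟨y, hy, hxy.trans ?_⟩
  calc deltaA a * (setNorm C + ‖x‖)
      ≤ deltaA a * (setNorm C + setNorm C / (1 - deltaA a)) := by
        gcongr
        exact norm_le_setNorm_div_of_mem_PGA a (fun i => (ha_norm i).le) hδ1 hCne hCcomp hx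
    _ = (2 - deltaA a) / (1 - deltaA a) * deltaA a * setNorm C := by
        field_simp
        ring

theorem stmt_17 (d N : ℕ) (hd : 1 ≤ d) (hN : 1 ≤ N)
    (a : Fin N → EuclideanSpace ℝ (Fin d))
    (ha_inj : Function.Injective a) (ha_norm : ∀ i, ‖a i‖ = 1)
    (hQ0 : Qset a 0 = {0})
    (hδ0 : 0 < deltaA a) (hδ1 : deltaA a < 1)
    (C : Set (EuclideanSpace ℝ (Fin d)))
    (hCne : C.Nonempty) (hCconv : Convex ℝ C) (hCcomp : IsCompact C) :
    C ⊆ PGA a C ∧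
      Metric.hausdorffDist (PGA a C) C ≤
        (2 - deltaA a) / (1 - deltaA a) * deltaA a * setNorm C :=
  stmt_17_general d N hN a ha_norm hδ1 C hCne hCconv hCcomp
end
end
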